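/- arXiv:0903.4276 — 12 statements merged into one kernel-verified Lean document; each statement's English description precedes it below -/
import Mathlib

section
/- Every higher dimensional transition system is a weak higher dimensional transition system: if a transition structure (S, μ : L → Σ, T) satisfies the Multiset axiom, CSA1, CSA2 and CSA3, then T also satisfies the Coherence axiom. -/
/-!
Statement 0: Every higher dimensional transition system is a weak higher
dimensional transition system: if a transition structure (S, μ : L → Σ, T)
satisfies the Multiset axiom, CSA1, CSA2 and CSA3, then T also satisfies the
Coherence axiom.

A transition (α, u_1, …, u_n, β) with n ≥ 1 is encoded as `T α [u_1, …, u_n] β`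
with a nonempty list of actions.
-/

variable {S L Λ : Type*}

/-- The Multiset axiom: the set of transitions is closed under permutations of
the list of actions. -/
def MultisetAxiom (T : S → List L → S → Prop) : Prop :=
  ∀ (α β : S) (l l' : List L), l.Perm l' → T α l β → T α l' β

/-- The Coherence axiom. -/
def CoherenceAxiom (T : S → List L → S → Prop) : Prop :=
  ∀ (α β ν₁ ν₂ : S) (l₁ l₂ l₃ : List L), l₁ ≠ [] → l₂ ≠ [] → l₃ ≠ [] →
    T α (l₁ ++ l₂ ++ l₃) β → T α l₁ ν₁ → T ν₁ (l₂ ++ l₃) β →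
    T α (l₁ ++ l₂) ν₂ → T ν₂ l₃ β → T ν₁ l₂ ν₂

/-- The first Cattani-Sassone axiom. -/
def CSA1 (μ : L → Λ) (T : S → List L → S → Prop) : Prop :=
  ∀ (α β : S) (u u' : L), T α [u] β → T α [u'] β → μ u = μ u' → u = u'

/-- The second Cattani-Sassone axiom. -/
def CSA2 (T : S → List L → S → Prop) : Prop :=
  ∀ (α β : S) (l₁ l₂ : List L), l₁ ≠ [] → l₂ ≠ [] → T α (l₁ ++ l₂) β →
    (∃! ν₁, T α l₁ ν₁ ∧ T ν₁ l₂ β) ∧ (∃! ν₂, T α l₂ ν₂ ∧ T ν₂ l₁ β)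

/-- The third Cattani-Sassone axiom. -/
def CSA3 (T : S → List L → S → Prop) : Prop :=
  ∀ (α β ν₁ ν₂ ν₁' ν₂' : S) (l₁ l₂ l₃ : List L), l₁ ≠ [] → l₂ ≠ [] → l₃ ≠ [] →
    T α (l₁ ++ l₂ ++ l₃) β → T α l₁ ν₁ → T ν₁ (l₂ ++ l₃) β →
    T ν₁ l₂ ν₂ → T ν₂ l₃ β → T α (l₁ ++ l₂) ν₂' → T ν₂' l₃ β →
    T α l₁ ν₁' → T ν₁' l₂ ν₂' → ν₁ = ν₁' ∧ ν₂ = ν₂'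

/-- Every higher dimensional transition system is a weak higher dimensional
transition system. -/
theorem coherence_of_csa (μ : L → Λ) (T : S → List L → S → Prop)
    (hne : ∀ α l β, T α l β → l ≠ [])
    (hmul : MultisetAxiom T) (h1 : CSA1 μ T) (h2 : CSA2 T) (h3 : CSA3 T) :
    CoherenceAxiom T := by
  intro α β ν₁ ν₂ l₁ l₂ l₃ h₁ h₂ h₃ hT hT1 hT23 hT12 hT3
  obtain ⟨⟨ν, ⟨hν2, hν3⟩, -⟩, -⟩ := h2 ν₁ β l₂ l₃ h₂ h₃ hT23
  obtain ⟨⟨ν₁', ⟨hν₁'1, hν₁'2⟩, -⟩, -⟩ := h2 α ν₂ l₁ l₂ h₁ h₂ hT12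
  obtain ⟨-, hνν₂⟩ := h3 α β ν₁ ν ν₁' ν₂ l₁ l₂ l₃ h₁ h₂ h₃ hT hT1 hT23 hν2 hν3 hT12 hT3 hν₁'1 hν₁'2
  exact hνν₂ ▸ hν2
end

section
/- A weak higher dimensional transition system satisfies the second and third Cattani–Sassone axioms if and only if it satisfies the Unique intermediate state axiom: for a transition structure (S, μ : L → Σ, T) satisfying the Multiset and Coherence axioms, T satisfies CSA2 and CSA3 if and only if T satisfies the Unique intermediate state axiom. -/
variable {S L Λ : Type*}

/-- The Unique intermediate state axiom. -/
def UniqueIntermediate (T : S → List L → S → Prop) : Prop :=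
  ∀ (α β : S) (l₁ l₂ : List L), l₁ ≠ [] → l₂ ≠ [] → T α (l₁ ++ l₂) β →
    ∃! ν, T α l₁ ν ∧ T ν l₂ β

/-- A weak higher dimensional transition system satisfies CSA2 and CSA3 if and
only if it satisfies the Unique intermediate state axiom. -/
theorem csa2_and_csa3_iff_uniqueIntermediate (T : S → List L → S → Prop)
    (hne : ∀ α l β, T α l β → l ≠ [])
    (hmul : MultisetAxiom T) (hcoh : CoherenceAxiom T) :
    (CSA2 T ∧ CSA3 T) ↔ UniqueIntermediate T := by
  constructor
  · rintro ⟨h2, _⟩ α β l₁ l₂ h1 h2' ht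
    exact (h2 α β l₁ l₂ h1 h2' ht).1
  · intro hui
    refine ⟨?_, ?_⟩
    · intro α β l₁ l₂ h1 h2 ht
      refine ⟨hui α β l₁ l₂ h1 h2 ht, ?_⟩
      exact hui α β l₂ l₁ h2 h1 (hmul α β _ _ List.perm_append_comm ht)
    · intro α β ν₁ ν₂ ν₁' ν₂' l₁ l₂ l₃ h1 h2 h3 ht ha1 ha2 ha3 ha4 hb1 hb2 hb3 hb4
      have hc : T ν₁ l₂ ν₂' := hcoh α β ν₁ ν₂' l₁ l₂ l₃ h1 h2 h3 ht ha1 ha2 hb1 hb2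
      have hν₂ : ν₂ = ν₂' := by
        obtain ⟨ν, _, huniq⟩ := hui ν₁ β l₂ l₃ h2 h3 ha2
        rw [huniq ν₂ ⟨ha3, ha4⟩, huniq ν₂' ⟨hc, hb2⟩]
      have hν₁ : ν₁ = ν₁' := by
        obtain ⟨ν, _, huniq⟩ := hui α ν₂' l₁ l₂ h1 h2 hb1
        rw [huniq ν₁ ⟨ha1, hc⟩, huniq ν₁' ⟨hb3, hb4⟩]
      exact ⟨hν₁, hν₂⟩
end

section
/- A transition structure (S, μ : L → Σ, T) is a higher dimensional transition system if and only if it is a weak higher dimensional transition system satisfying CSA1 and the Unique intermediate state axiom; that is, T satisfies the Multiset axiom, CSA1, CSA2 and CSA3 if and only if T satisfies the Multiset axiom, the Coherence axiom, CSA1 and the Unique intermediate state axiom. -/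
variable {S L Λ : Type*}

/-- A transition structure is a higher dimensional transition system (Multiset
axiom, CSA1, CSA2 and CSA3) if and only if it is a weak higher dimensional
transition system (Multiset and Coherence axioms) satisfying CSA1 and the
Unique intermediate state axiom. -/
theorem hdts_iff_whdts_csa1_uniqueIntermediate (μ : L → Λ) (T : S → List L → S → Prop)
    (hne : ∀ α l β, T α l β → l ≠ []) :
    (MultisetAxiom T ∧ CSA1 μ T ∧ CSA2 T ∧ CSA3 T) ↔
      (MultisetAxiom T ∧ CoherenceAxiom T ∧ CSA1 μ T ∧ UniqueIntermediate T) := by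
  constructor
  · rintro ⟨hm, h1, h2, h3⟩
    refine ⟨hm, ?_, h1, ?_⟩
    · intro α β ν₁ ν₂ l₁ l₂ l₃ h₁ h₂ h₃ hT hT1 hT23 hT12 hT3
      -- split T ν₁ (l₂ ++ l₃) β
      obtain ⟨⟨ν, ⟨hν2, hν3⟩, _⟩, -⟩ := h2 ν₁ β l₂ l₃ h₂ h₃ hT23
      -- split T α (l₁ ++ l₂) ν₂
      obtain ⟨⟨ν₁', ⟨hν₁'1, hν₁'2⟩, -⟩, -⟩ := h2 α ν₂ l₁ l₂ h₁ h₂ hT12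
      obtain ⟨e1, e2⟩ := h3 α β ν₁ ν ν₁' ν₂ l₁ l₂ l₃ h₁ h₂ h₃ hT hT1 hT23 hν2 hν3
        hT12 hT3 hν₁'1 hν₁'2
      exact e2 ▸ hν2
    · intro α β l₁ l₂ h₁ h₂ hT
      exact (h2 α β l₁ l₂ h₁ h₂ hT).1
  · rintro ⟨hm, hc, h1, hu⟩
    have hcsa2 : CSA2 T := by
      intro α β l₁ l₂ h₁ h₂ hT
      refine ⟨hu α β l₁ l₂ h₁ h₂ hT, ?_⟩
      exact hu α β l₂ l₁ h₂ h₁ (hm α β _ _ (List.perm_append_comm) hT)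
    refine ⟨hm, h1, hcsa2, ?_⟩
    intro α β ν₁ ν₂ ν₁' ν₂' l₁ l₂ l₃ h₁ h₂ h₃ hT hT1 hT23 hT2 hT3 hT12 hT3' hT1' hT2'
    have hT12' := hT12
    have hcoh := hc α β ν₁ ν₂' l₁ l₂ l₃ h₁ h₂ h₃ hT hT1 hT23 hT12 hT3'
    have e2 : ν₂ = ν₂' := by
      obtain ⟨ν, -, huniq⟩ := hu ν₁ β l₂ l₃ h₂ h₃ hT23
      rw [huniq ν₂ ⟨hT2, hT3⟩, huniq ν₂' ⟨hcoh, hT3'⟩]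
    have e1 : ν₁ = ν₁' := by
      obtain ⟨ν, -, huniq⟩ := hu α ν₂' l₁ l₂ h₁ h₂ hT12
      rw [huniq ν₁ ⟨hT1, e2 ▸ hT2⟩, huniq ν₁' ⟨hT1', hT2'⟩]
    exact ⟨e1, e2⟩
end

section
/- Let n ≥ 0 and a_1,…,a_n ∈ Σ, let X = (S, μ : L → Σ, T) be a weak higher dimensional transition system, and let f_0 : {0,1}^n → S and f̃ : {(a_1,1),…,(a_n,n)} → L be set maps with μ(f̃(a_i,i)) = a_i for all i. Then the following are equivalent: (1) the pair (f_0, f̃) is a morphism of weak higher dimensional transition systems from C_n[a_1,…,a_n] to X, i.e. it takes every transition of C_n[a_1,…,a_n] to a transition of X; (2) for every transition ((ε_1,…,ε_n),(a_{i_1},i_1),…,(a_{i_r},i_r),(ε'_1,…,ε'_n)) of C_n[a_1,…,a_n] with (ε_1,…,ε_n) = 0_n or (ε'_1,…,ε'_n) = 1_n, the tuple (f_0(ε_1,…,ε_n), f̃(a_{i_1},i_1),…, f̃(a_{i_r},i_r), f_0(ε'_1,…,ε'_n)) is a transition of X. -/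
variable {S L Λ : Type*}

/-- The set of transitions of the cube `C_n[a_1,…,a_n]`: the states are the
elements of `{0,1}^n`, the actions are the indices `i ∈ {1,…,n}` (the action
`i` standing for the pair `(a_i, i)`, labelled by `a_i`). -/
@[reducible] def CubeT (n : ℕ) (ε : Fin n → Bool) (l : List (Fin n)) (ε' : Fin n → Bool) :
    Prop :=
  l ≠ [] ∧ l.Nodup ∧ (∀ i, ε i ≤ ε' i) ∧ ∀ i : Fin n, ε i ≠ ε' i ↔ i ∈ l

/-! An interior transition `ε →l ε'` of the cube is recovered by coherence from the long
transition `0 → 1` labelled `l₁ ++ l ++ l₃`, where `l₁` lists the coordinates already set in `ε`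
and `l₃` those still unset in `ε'`: the five transitions `0 →l₁ ε`, `ε →(l ++ l₃) 1`,
`0 →(l₁ ++ l) ε'`, `ε' →l₃ 1` and `0 → 1` that coherence needs all start at `0` or end at `1`. -/

namespace CubeT

variable {n : ℕ}

theorem append {ε ε' ε'' : Fin n → Bool} {l₁ l₂ : List (Fin n)}
    (h₁ : CubeT n ε l₁ ε') (h₂ : CubeT n ε' l₂ ε'') : CubeT n ε (l₁ ++ l₂) ε'' := by
  obtain ⟨hne₁, hnd₁, hle₁, hmem₁⟩ := h₁
  obtain ⟨-, hnd₂, hle₂, hmem₂⟩ := h₂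
  have hdisj : l₁.Disjoint l₂ := fun i hi₁ hi₂ => by
    have h₁ := (hmem₁ i).2 hi₁; have h₂ := (hmem₂ i).2 hi₂; have h₃ := hle₁ i; have h₄ := hle₂ i
    revert h₁ h₂ h₃ h₄
    cases ε i <;> cases ε' i <;> cases ε'' i <;> decide
  refine ⟨by simp [hne₁], hnd₁.append hnd₂ hdisj, fun i => (hle₁ i).trans (hle₂ i), fun i => ?_⟩
  rw [List.mem_append, ← hmem₁, ← hmem₂]
  have h₁ := hle₁ i; have h₂ := hle₂ i
  revert h₁ h₂
  cases ε i <;> cases ε' i <;> cases ε'' i <;> decide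

theorem of_le_of_ne {ε ε' : Fin n → Bool} (hle : ∀ i, ε i ≤ ε' i) (hne : ε ≠ ε') :
    CubeT n ε ((List.finRange n).filter fun i => ε i != ε' i) ε' := by
  obtain ⟨i, hi⟩ := Function.ne_iff.1 hne
  refine ⟨List.ne_nil_of_mem (a := i) ?_, (List.nodup_finRange n).filter _, hle, fun j => ?_⟩ <;>
    simp [hi]

end CubeT

theorem cube_morphism_iff_boundary_general {S L : Type*} (n : ℕ)
    (T : S → List L → S → Prop)
    (hcoh : CoherenceAxiom T)
    (f0 : (Fin n → Bool) → S) (fa : Fin n → L) :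
    (∀ (ε : Fin n → Bool) (l : List (Fin n)) (ε' : Fin n → Bool),
        CubeT n ε l ε' → T (f0 ε) (l.map fa) (f0 ε')) ↔
    (∀ (ε : Fin n → Bool) (l : List (Fin n)) (ε' : Fin n → Bool),
        CubeT n ε l ε' → ((ε = fun _ => false) ∨ (ε' = fun _ => true)) →
        T (f0 ε) (l.map fa) (f0 ε')) := by
  refine ⟨fun h ε l ε' hc _ => h ε l ε' hc, fun h ε l ε' hc => ?_⟩
  by_cases h0 : ε = fun _ => false
  · exact h ε l ε' hc (.inl h0)
  by_cases h1 : ε' = fun _ => true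
  · exact h ε l ε' hc (.inr h1)
  have hc₁ := CubeT.of_le_of_ne (fun i => Bool.false_le (ε i)) (Ne.symm h0)
  have hc₃ := CubeT.of_le_of_ne (fun i => Bool.le_true (ε' i)) h1
  set l₁ := (List.finRange n).filter fun i => false != ε i
  set l₃ := (List.finRange n).filter fun i => ε' i != true
  have t₁₂₃ := h _ _ _ ((hc₁.append hc).append hc₃) (.inl rfl)
  have t₁ := h _ _ _ hc₁ (.inl rfl)
  have t₂₃ := h _ _ _ (hc.append hc₃) (.inr rfl)
  have t₁₂ := h _ _ _ (hc₁.append hc) (.inl rfl)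
  have t₃ := h _ _ _ hc₃ (.inr rfl)
  simp only [List.map_append] at t₁₂₃ t₂₃ t₁₂
  exact hcoh _ _ _ _ (l₁.map fa) (l.map fa) (l₃.map fa) (by simpa using hc₁.1)
    (by simpa using hc.1) (by simpa using hc₃.1) t₁₂₃ t₁ t₂₃ t₁₂ t₃

/-- A pair of set maps `(f₀, f̃)` from the cube `C_n[a_1,…,a_n]` to a weak
higher dimensional transition system `X = (S, μ : L → Σ, T)`, compatible with
the labelling, induces a morphism of weak higher dimensional transition systems
(i.e. takes every transition of the cube to a transition of `X`) if and only if
it takes every transition of the cube starting at `0_n` or ending at `1_n` to a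
transition of `X`. -/
theorem cube_morphism_iff_boundary {Λ S L : Type*} (n : ℕ) (a : Fin n → Λ)
    (μ : L → Λ) (T : S → List L → S → Prop)
    (hne : ∀ α l β, T α l β → l ≠ [])
    (hmul : MultisetAxiom T) (hcoh : CoherenceAxiom T)
    (f0 : (Fin n → Bool) → S) (fa : Fin n → L) (hlabel : ∀ i, μ (fa i) = a i) :
    (∀ (ε : Fin n → Bool) (l : List (Fin n)) (ε' : Fin n → Bool),
        CubeT n ε l ε' → T (f0 ε) (l.map fa) (f0 ε')) ↔
    (∀ (ε : Fin n → Bool) (l : List (Fin n)) (ε' : Fin n → Bool),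
        CubeT n ε l ε' → ((ε = fun _ => false) ∨ (ε' = fun _ => true)) →
        T (f0 ε) (l.map fa) (f0 ε')) :=
  cube_morphism_iff_boundary_general n T hcoh f0 fa
end

section
/- A weak higher dimensional transition system X satisfies the Unique intermediate state axiom if and only if it is orthogonal to all the inclusions C_n[a_1,…,a_n]^ext ⊆ C_n[a_1,…,a_n] (n ≥ 0, a_1,…,a_n ∈ Σ); that is, if and only if for every n ≥ 0 and a_1,…,a_n ∈ Σ, the restriction map from the set of morphisms C_n[a_1,…,a_n] → X to the set of morphisms C_n[a_1,…,a_n]^ext → X is a bijection. -/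
variable {S L Λ : Type*}

universe u u1 u2 u3 u4 u5 u6

/-- A transition structure over the set of labels `Λ`: a set of states `S`, a
set of actions `L`, a labelling map `μ : L → Λ`, and a set of transitions
`(α, u_1, …, u_n, β)` encoded as `T α [u_1, …, u_n] β`. Weak higher dimensional
transition systems are the transition structures whose transitions have
nonempty lists of actions and satisfying the Multiset and Coherence axioms. -/
structure TransSys (Λ : Type u) where
  /-- the states -/
  S : Type u1
  /-- the actions -/
  L : Type u2
  /-- the labelling map -/
  μ : L → Λ
  /-- the transitions -/
  T : S → List L → S → Prop

/-- A morphism of (weak higher dimensional) transition systems: a pair of set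
maps on states and actions commuting with the labelling maps and taking
transitions to transitions. -/
structure TransSys.Hom {Λ : Type u} (X : TransSys.{u, u1, u2} Λ)
    (Y : TransSys.{u, u3, u4} Λ) where
  /-- the map on states -/
  f0 : X.S → Y.S
  /-- the map on actions -/
  fa : X.L → Y.L
  label : ∀ x, Y.μ (fa x) = X.μ x
  map : ∀ (α : X.S) (l : List X.L) (β : X.S), X.T α l β → Y.T (f0 α) (l.map fa) (f0 β)

/-- Composition of morphisms of transition systems. -/
def TransSys.Hom.comp {Λ : Type u} {X : TransSys.{u, u1, u2} Λ}
    {Y : TransSys.{u, u3, u4} Λ} {Z : TransSys.{u, u5, u6} Λ}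
    (g : Y.Hom Z) (f : X.Hom Y) : X.Hom Z where
  f0 := fun x => g.f0 (f.f0 x)
  fa := fun x => g.fa (f.fa x)
  label := fun x => (g.label (f.fa x)).trans (f.label x)
  map := fun α l β h => by
    have h2 := g.map _ _ _ (f.map α l β h)
    rw [List.map_map] at h2
    exact h2

/-- The cube `C_n[a_1,…,a_n]` as a (weak higher dimensional) transition
system. -/
@[reducible] def cube {Λ : Type u} (n : ℕ) (a : Fin n → Λ) : TransSys.{u, 0, 0} Λ where
  S := Fin n → Bool
  L := Fin n
  μ := a
  T := CubeT n
/-- The sub-system `C_n[a_1,…,a_n]^ext`: its states are `0_n` and `1_n`, its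
actions are those of the cube, and its transitions are the tuples
`(0_n, (a_{σ(1)},σ(1)), …, (a_{σ(n)},σ(n)), 1_n)` for `σ` a permutation of
`{1,…,n}`, i.e. the nonempty lists of indices without repetition containing
every index. -/
@[reducible] def cubeExt {Λ : Type u} (n : ℕ) (a : Fin n → Λ) : TransSys.{u, 0, 0} Λ where
  S := {ε : Fin n → Bool // ε = (fun _ => false) ∨ ε = (fun _ => true)}
  L := Fin n
  μ := a
  T := fun x l y => x.1 = (fun _ => false) ∧ y.1 = (fun _ => true) ∧
    l ≠ [] ∧ l.Nodup ∧ ∀ i : Fin n, i ∈ l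

/-- The inclusion `C_n[a_1,…,a_n]^ext ⊆ C_n[a_1,…,a_n]`. -/
def extIncl {Λ : Type u} (n : ℕ) (a : Fin n → Λ) : (cubeExt n a).Hom (cube n a) where
  f0 := Subtype.val
  fa := id
  label := fun _ => rfl
  map := fun x l y h => by
    obtain ⟨hx, hy, hne, hnd, hall⟩ := h
    rw [List.map_id, hx, hy]
    exact ⟨hne, hnd, fun i => by simp, fun i => by simpa using hall i⟩

/-!
Extending a morphism `C_n[a]^ext → X` to the whole cube amounts to choosing, for every inner
vertex `ε`, a state `ν` through which the diagonal transition splits: the actions switched on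
in `ε` lead from the image of `0_n` to `ν`, and the remaining ones lead from `ν` to the image of
`1_n` (`IsCubeVertex`). Coherence makes every such choice of states a morphism of the cube, so
unique intermediate states give exactly one extension. Conversely, a splitting `l₁ ++ l₂` of a
transition is the diagonal through the vertex `(1,…,1,0,…,0)` of the cube on the actions of
`l₁ ++ l₂`; its intermediate states are the possible images of that vertex, surjectivity of the
restriction provides one and injectivity makes it unique.
-/

namespace CubeT

variable {n : ℕ} {ε ε' ε'' : Fin n → Bool} {l l' : List (Fin n)}

theorem ne (h : CubeT n ε l ε') : ε ≠ ε' := by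
  obtain ⟨i, hi⟩ := List.exists_mem_of_ne_nil l h.1
  exact fun hε => (h.2.2.2 i).2 hi (congrFun hε i)

theorem perm (h : CubeT n ε l ε') (h' : CubeT n ε l' ε') : l.Perm l' :=
  (List.perm_ext_iff_of_nodup h.2.1 h'.2.1).2 fun i => (h.2.2.2 i).symm.trans (h'.2.2.2 i)

theorem trans (h : CubeT n ε l ε') (h' : CubeT n ε' l' ε'') : CubeT n ε (l ++ l') ε'' := by
  obtain ⟨hne, hnd, hle, hmem⟩ := h
  obtain ⟨-, hnd', hle', hmem'⟩ := h'
  refine ⟨by simp [hne], hnd.append hnd' fun i hi hi' => ?_, fun i => (hle i).trans (hle' i),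
    fun i => ?_⟩
  all_goals
    have h₁ := hle i; have h₂ := hle' i; have h₃ := hmem i; have h₄ := hmem' i
    clear hle hle' hmem hmem'
    revert h₁ h₂ h₃ h₄
    generalize ε i = a, ε' i = b, ε'' i = c
    cases a <;> cases b <;> cases c <;> simp <;> tauto

theorem exists_of_lt (h : ε < ε') : ∃ l, CubeT n ε l ε' := by
  refine ⟨(List.finRange n).filter fun i => ε i ≠ ε' i, ?_, (List.nodup_finRange n).filter _,
    h.le, fun i => by simp⟩
  obtain ⟨i, hi⟩ := Function.ne_iff.1 h.ne
  exact List.ne_nil_of_mem (a := i) (by simpa using hi)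

end CubeT

section Vertices

variable {n : ℕ} {T : S → List L → S → Prop} {u : Fin n → L} {α β : S}

def IsCubeVertex (T : S → List L → S → Prop) (u : Fin n → L) (α β : S) (ε : Fin n → Bool)
    (ν : S) : Prop :=
  (∀ l, CubeT n ⊥ l ε → T α (l.map u) ν) ∧ ∀ l, CubeT n ε l ⊤ → T ν (l.map u) β

theorem isCubeVertex_bot (hfull : ∀ l, CubeT n ⊥ l ⊤ → T α (l.map u) β) :
    IsCubeVertex T u α β ⊥ α :=
  ⟨fun _ h => absurd rfl h.ne, hfull⟩

theorem isCubeVertex_top (hfull : ∀ l, CubeT n ⊥ l ⊤ → T α (l.map u) β) :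
    IsCubeVertex T u α β ⊤ β :=
  ⟨hfull, fun _ h => absurd rfl h.ne⟩

theorem exists_path_through_of_uniqueIntermediate (hUI : UniqueIntermediate T)
    (hfull : ∀ l, CubeT n ⊥ l ⊤ → T α (l.map u) β) {ε : Fin n → Bool} (hε₀ : ε ≠ ⊥)
    (hε₁ : ε ≠ ⊤) :
    ∃ A C, CubeT n ⊥ A ε ∧ CubeT n ε C ⊤ ∧ ∃! ν, T α (A.map u) ν ∧ T ν (C.map u) β := by
  obtain ⟨A, hA⟩ := CubeT.exists_of_lt (bot_lt_iff_ne_bot.2 hε₀)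
  obtain ⟨C, hC⟩ := CubeT.exists_of_lt (lt_top_iff_ne_top.2 hε₁)
  have hAC := hfull _ (hA.trans hC)
  rw [List.map_append] at hAC
  exact ⟨A, C, hA, hC, hUI _ _ _ _ (by simpa using hA.1) (by simpa using hC.1) hAC⟩

theorem IsCubeVertex.unique (hUI : UniqueIntermediate T)
    (hfull : ∀ l, CubeT n ⊥ l ⊤ → T α (l.map u) β) {ε : Fin n → Bool} (hε₀ : ε ≠ ⊥)
    (hε₁ : ε ≠ ⊤) {ν ν' : S} (hν : IsCubeVertex T u α β ε ν)
    (hν' : IsCubeVertex T u α β ε ν') : ν = ν' := by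
  obtain ⟨A, C, hA, hC, h⟩ := exists_path_through_of_uniqueIntermediate hUI hfull hε₀ hε₁
  exact h.unique ⟨hν.1 A hA, hν.2 C hC⟩ ⟨hν'.1 A hA, hν'.2 C hC⟩

theorem exists_isCubeVertex (hmul : MultisetAxiom T) (hUI : UniqueIntermediate T)
    (hfull : ∀ l, CubeT n ⊥ l ⊤ → T α (l.map u) β) (ε : Fin n → Bool) :
    ∃ ν, IsCubeVertex T u α β ε ν := by
  rcases eq_or_ne ε ⊥ with rfl | hε₀
  · exact ⟨α, isCubeVertex_bot hfull⟩
  rcases eq_or_ne ε ⊤ with rfl | hε₁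
  · exact ⟨β, isCubeVertex_top hfull⟩
  obtain ⟨A, C, hA, hC, ν, ⟨hAν, hνC⟩, -⟩ :=
    exists_path_through_of_uniqueIntermediate hUI hfull hε₀ hε₁
  exact ⟨ν, fun l hl => hmul _ _ _ _ ((hA.perm hl).map u) hAν,
    fun l hl => hmul _ _ _ _ ((hC.perm hl).map u) hνC⟩

theorem map_cubeT_of_isCubeVertex (hcoh : CoherenceAxiom T)
    {ψ : (Fin n → Bool) → S} (hψ : ∀ ε, IsCubeVertex T u (ψ ⊥) (ψ ⊤) ε (ψ ε))
    {ε ε' : Fin n → Bool} {l : List (Fin n)} (h : CubeT n ε l ε') :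
    T (ψ ε) (l.map u) (ψ ε') := by
  rcases eq_or_ne ε ⊥ with rfl | hε₀
  · exact (hψ ε').1 l h
  rcases eq_or_ne ε' ⊤ with rfl | hε₁
  · exact (hψ ε).2 l h
  -- `h` is the middle leg of the path `⊥ --A--> ε --l--> ε' --C--> ⊤`, to which Coherence applies.
  obtain ⟨A, hA⟩ := CubeT.exists_of_lt (bot_lt_iff_ne_bot.2 hε₀)
  obtain ⟨C, hC⟩ := CubeT.exists_of_lt (lt_top_iff_ne_top.2 hε₁)
  have hAlC := (hψ ⊤).1 _ ((hA.trans h).trans hC)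
  have hlC := (hψ ε).2 _ (h.trans hC)
  have hAl := (hψ ε').1 _ (hA.trans h)
  simp only [List.map_append] at hAlC hlC hAl
  exact hcoh _ _ _ _ _ _ _ (by simpa using hA.1) (by simpa using h.1) (by simpa using hC.1)
    hAlC ((hψ ε).1 A hA) hlC hAl ((hψ ε').2 C hC)

end Vertices

section Morphisms

variable {Λ : Type u} {X : TransSys.{u, u1, u2} Λ} {n : ℕ} {a : Fin n → Λ}

theorem TransSys.Hom.ext {Y : TransSys.{u, u3, u4} Λ} {f g : X.Hom Y} (h₀ : f.f0 = g.f0)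
    (ha : f.fa = g.fa) : f = g := by
  cases f; cases g; cases h₀; cases ha; rfl

def cubeExtBot (n : ℕ) : {ε : Fin n → Bool // ε = (fun _ => false) ∨ ε = (fun _ => true)} :=
  ⟨⊥, Or.inl rfl⟩

def cubeExtTop (n : ℕ) : {ε : Fin n → Bool // ε = (fun _ => false) ∨ ε = (fun _ => true)} :=
  ⟨⊤, Or.inr rfl⟩

theorem TransSys.Hom.map_cubeExt (e : (cubeExt n a).Hom X) (l : List (Fin n))
    (h : CubeT n ⊥ l ⊤) : X.T (e.f0 (cubeExtBot n)) (l.map e.fa) (e.f0 (cubeExtTop n)) :=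
  e.map _ l _ ⟨rfl, rfl, h.1, h.2.1, fun i => (h.2.2.2 i).1 (by simp)⟩

theorem TransSys.Hom.isCubeVertex (g : (cube n a).Hom X) (ε : Fin n → Bool) :
    IsCubeVertex X.T g.fa (g.f0 ⊥) (g.f0 ⊤) ε (g.f0 ε) :=
  ⟨fun l => g.map _ l _, fun l => g.map _ l _⟩

def fillVertices (e : (cubeExt n a).Hom X) (φ : (Fin n → Bool) → X.S) (ε : Fin n → Bool) :
    X.S :=
  if h : ε = ⊥ ∨ ε = ⊤ then e.f0 ⟨ε, h⟩ else φ ε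

theorem isCubeVertex_fillVertices {e : (cubeExt n a).Hom X} {φ : (Fin n → Bool) → X.S}
    (hφ : ∀ ε, ε ≠ ⊥ → ε ≠ ⊤ →
      IsCubeVertex X.T e.fa (e.f0 (cubeExtBot n)) (e.f0 (cubeExtTop n)) ε (φ ε))
    (ε : Fin n → Bool) :
    IsCubeVertex X.T e.fa (fillVertices e φ ⊥) (fillVertices e φ ⊤) ε (fillVertices e φ ε) := by
  unfold fillVertices
  rw [dif_pos (Or.inl rfl), dif_pos (Or.inr rfl)]
  by_cases hε : ε = ⊥ ∨ ε = ⊤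
  · rw [dif_pos hε]
    rcases hε with rfl | rfl
    exacts [isCubeVertex_bot e.map_cubeExt, isCubeVertex_top e.map_cubeExt]
  · rw [dif_neg hε]
    exact hφ ε (fun h => hε (Or.inl h)) (fun h => hε (Or.inr h))

section Extension

variable (hcoh : CoherenceAxiom X.T) (e : (cubeExt n a).Hom X) (φ : (Fin n → Bool) → X.S)
  (hφ : ∀ ε, ε ≠ ⊥ → ε ≠ ⊤ →
    IsCubeVertex X.T e.fa (e.f0 (cubeExtBot n)) (e.f0 (cubeExtTop n)) ε (φ ε))

def cubeHomOfVertices : (cube n a).Hom X where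
  f0 := fillVertices e φ
  fa := e.fa
  label := e.label
  map _ _ _ := map_cubeT_of_isCubeVertex hcoh (isCubeVertex_fillVertices hφ)

theorem cubeHomOfVertices_comp_extIncl :
    (cubeHomOfVertices hcoh e φ hφ).comp (extIncl n a) = e :=
  TransSys.Hom.ext (funext fun x => dif_pos x.2) rfl

theorem cubeHomOfVertices_f0 {ε : Fin n → Bool} (hε₀ : ε ≠ ⊥) (hε₁ : ε ≠ ⊤) :
    (cubeHomOfVertices hcoh e φ hφ).f0 ε = φ ε :=
  dif_neg (not_or.2 ⟨hε₀, hε₁⟩)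

end Extension

end Morphisms

theorem exists_cubeT_split (l₁ l₂ : List L) (h₁ : l₁ ≠ []) (h₂ : l₂ ≠ []) :
    ∃ (n : ℕ) (u : Fin n → L) (ε : Fin n → Bool) (A B : List (Fin n)),
      CubeT n ⊥ A ε ∧ CubeT n ε B ⊤ ∧ A.map u = l₁ ∧ B.map u = l₂ := by
  refine ⟨l₁.length + l₂.length, Fin.append l₁.get l₂.get,
    Fin.append (fun _ => true) (fun _ => false), (List.finRange _).map (Fin.castAdd _),
    (List.finRange _).map (Fin.natAdd _), ⟨?_, ?_, fun _ => bot_le, fun i => ?_⟩,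
    ⟨?_, ?_, fun _ => le_top, fun i => ?_⟩, ?_, ?_⟩
  · simpa using h₁
  · exact (List.nodup_finRange _).map (Fin.castAdd_injective _ _)
  · refine Fin.addCases (fun j => ?_) (fun j => ?_) i
    · simp
    · simp [Fin.ext_iff]; omega
  · simpa using h₂
  · exact (List.nodup_finRange _).map (Fin.natAdd_injective _ _)
  · refine Fin.addCases (fun j => ?_) (fun j => ?_) i
    · simp [Fin.ext_iff]; omega
    · simp
  · simp [Function.comp_def]
  · simp [Function.comp_def]

section Orthogonality

variable {Λ : Type u} {X : TransSys.{u, u1, u2} Λ} {n : ℕ} {a : Fin n → Λ}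

theorem comp_extIncl_injective (hUI : UniqueIntermediate X.T) :
    Function.Injective fun g : (cube n a).Hom X => g.comp (extIncl n a) := by
  intro g h (hgh : g.comp _ = h.comp _)
  have ha : g.fa = h.fa := (congrArg TransSys.Hom.fa hgh :)
  have hbot : g.f0 ⊥ = h.f0 ⊥ := (congrFun (congrArg TransSys.Hom.f0 hgh) (cubeExtBot n) :)
  have htop : g.f0 ⊤ = h.f0 ⊤ := (congrFun (congrArg TransSys.Hom.f0 hgh) (cubeExtTop n) :)
  refine TransSys.Hom.ext (funext fun ε => ?_) ha
  rcases eq_or_ne ε ⊥ with rfl | hε₀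
  · exact hbot
  rcases eq_or_ne ε ⊤ with rfl | hε₁
  · exact htop
  refine (g.isCubeVertex ε).unique hUI (fun l => g.map ⊥ l ⊤) hε₀ hε₁ ?_
  rw [ha, hbot, htop]
  exact h.isCubeVertex ε

theorem comp_extIncl_surjective (hmul : MultisetAxiom X.T) (hcoh : CoherenceAxiom X.T)
    (hUI : UniqueIntermediate X.T) :
    Function.Surjective fun g : (cube n a).Hom X => g.comp (extIncl n a) := by
  intro e
  choose φ hφ using exists_isCubeVertex hmul hUI e.map_cubeExt
  exact ⟨cubeHomOfVertices hcoh e φ fun ε _ _ => hφ ε, cubeHomOfVertices_comp_extIncl hcoh e _ _⟩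

theorem eq_f0_of_isCubeVertex (hcoh : CoherenceAxiom X.T)
    (hinj : Function.Injective fun g : (cube n a).Hom X => g.comp (extIncl n a))
    (g : (cube n a).Hom X) {ε : Fin n → Bool} (hε₀ : ε ≠ ⊥) (hε₁ : ε ≠ ⊤) {ν : X.S}
    (hν : IsCubeVertex X.T g.fa (g.f0 ⊥) (g.f0 ⊤) ε ν) : ν = g.f0 ε := by
  set φ := Function.update g.f0 ε ν
  have hφ : ∀ δ, δ ≠ ⊥ → δ ≠ ⊤ → IsCubeVertex X.T g.fa (g.f0 ⊥) (g.f0 ⊤) δ (φ δ) := by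
    intro δ _ _
    rcases eq_or_ne δ ε with rfl | hδ
    · simpa [φ] using hν
    · simpa [φ, hδ] using g.isCubeVertex δ
  have hg := hinj (cubeHomOfVertices_comp_extIncl hcoh (g.comp (extIncl n a)) φ hφ)
  calc ν = φ ε := by simp [φ]
    _ = _ := (cubeHomOfVertices_f0 hcoh _ φ hφ hε₀ hε₁).symm
    _ = g.f0 ε := by rw [hg]

def extHomOfFull {α β : X.S} {u : Fin n → X.L}
    (hfull : ∀ l, CubeT n ⊥ l ⊤ → X.T α (l.map u) β) : (cubeExt n (X.μ ∘ u)).Hom X where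
  f0 x := if x.1 = ⊥ then α else β
  fa := u
  label _ := rfl
  map := by
    intro x l y ⟨hx, hy, hne, hnd, hall⟩
    have h : CubeT n ⊥ l ⊤ := ⟨hne, hnd, fun _ => bot_le, fun i => by simp [hall i]⟩
    rw [show x.1 = ⊥ from hx, show y.1 = ⊤ from hy, if_pos rfl, if_neg h.ne.symm]
    exact hfull l h

theorem uniqueIntermediate_of_bijective (hmul : MultisetAxiom X.T) (hcoh : CoherenceAxiom X.T)
    (horth : ∀ (n : ℕ) (a : Fin n → Λ),
      Function.Bijective fun g : (cube n a).Hom X => g.comp (extIncl n a)) :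
    UniqueIntermediate X.T := by
  intro α β l₁ l₂ h₁ h₂ hT
  obtain ⟨n, u, ε, A, B, hA, hB, rfl, rfl⟩ := exists_cubeT_split l₁ l₂ h₁ h₂
  have hfull : ∀ l, CubeT n ⊥ l ⊤ → X.T α (l.map u) β := fun l hl =>
    hmul _ _ _ _ (((hA.trans hB).perm hl).map u) (by simpa using hT)
  obtain ⟨g, hg⟩ := (horth n (X.μ ∘ u)).2 (extHomOfFull hfull)
  have hu : g.fa = u := congrArg TransSys.Hom.fa hg
  have hα : g.f0 ⊥ = α :=
    (congrFun (congrArg TransSys.Hom.f0 hg) (cubeExtBot n)).trans (if_pos rfl)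
  have hβ : g.f0 ⊤ = β :=
    (congrFun (congrArg TransSys.Hom.f0 hg) (cubeExtTop n)).trans
      (if_neg (hA.trans hB).ne.symm)
  have hε := g.isCubeVertex ε
  rw [hu, hα, hβ] at hε
  refine ⟨g.f0 ε, ⟨hε.1 A hA, hε.2 B hB⟩, fun ν hν => ?_⟩
  refine eq_f0_of_isCubeVertex hcoh (horth n _).1 g hA.ne.symm hB.ne ?_
  rw [hu, hα, hβ]
  exact ⟨fun l hl => hmul _ _ _ _ ((hA.perm hl).map u) hν.1,
    fun l hl => hmul _ _ _ _ ((hB.perm hl).map u) hν.2⟩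

end Orthogonality

theorem uniqueIntermediate_iff_orthogonal_ext_general {Λ : Type u} (X : TransSys.{u, u1, u2} Λ)
    (hmul : MultisetAxiom X.T) (hcoh : CoherenceAxiom X.T) :
    UniqueIntermediate X.T ↔
      ∀ (n : ℕ) (a : Fin n → Λ),
        Function.Bijective
          (fun g : (cube n a).Hom X => g.comp (extIncl n a)) :=
  ⟨fun hUI _ _ => ⟨comp_extIncl_injective hUI, comp_extIncl_surjective hmul hcoh hUI⟩,
    uniqueIntermediate_of_bijective hmul hcoh⟩

/-- A weak higher dimensional transition system `X` satisfies the Unique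
intermediate state axiom if and only if it is orthogonal to all the inclusions
`C_n[a_1,…,a_n]^ext ⊆ C_n[a_1,…,a_n]` for `n ≥ 0` and `a_1,…,a_n ∈ Σ`, i.e.
if and only if for every `n ≥ 0` and all labels `a_1,…,a_n`, the restriction
map from morphisms `C_n[a_1,…,a_n] → X` to morphisms `C_n[a_1,…,a_n]^ext → X`
is a bijection. -/
theorem uniqueIntermediate_iff_orthogonal_ext {Λ : Type u} (X : TransSys.{u, u1, u2} Λ)
    (hne : ∀ α l β, X.T α l β → l ≠ [])
    (hmul : MultisetAxiom X.T) (hcoh : CoherenceAxiom X.T) :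
    UniqueIntermediate X.T ↔
      ∀ (n : ℕ) (a : Fin n → Λ),
        Function.Bijective
          (fun g : (cube n a).Hom X => g.comp (extIncl n a)) :=
  uniqueIntermediate_iff_orthogonal_ext_general X hmul hcoh
end

section
/- Let S and L be sets and let T ⊆ ⋃_{n≥1} S × L^n × S be a set of tuples satisfying the Multiset axiom. Then the closure of T under the Coherence axiom (the smallest superset of T closed under the Coherence rule) also satisfies the Multiset axiom. -/
variable {S L : Type*}

/-- The closure of a set of tuples under the Coherence rule: the smallest
superset of `T` closed under the Coherence rule. -/
inductive CohClosure (T : S → List L → S → Prop) : S → List L → S → Prop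
  | base {α : S} {l : List L} {β : S} : T α l β → CohClosure T α l β
  | coh {α β ν₁ ν₂ : S} {l₁ l₂ l₃ : List L} :
      l₁ ≠ [] → l₂ ≠ [] → l₃ ≠ [] →
      CohClosure T α (l₁ ++ l₂ ++ l₃) β → CohClosure T α l₁ ν₁ →
      CohClosure T ν₁ (l₂ ++ l₃) β → CohClosure T α (l₁ ++ l₂) ν₂ →
      CohClosure T ν₂ l₃ β → CohClosure T ν₁ l₂ ν₂

/-- If a set of tuples satisfies the Multiset axiom, then its closure under the
Coherence axiom also satisfies the Multiset axiom. -/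
theorem multisetAxiom_cohClosure (T : S → List L → S → Prop)
    (h : MultisetAxiom T) : MultisetAxiom (CohClosure T) := by
  intro α β l l' hp hc
  induction hc generalizing l' with
  | base ht => exact .base (h _ _ _ _ hp ht)
  | @coh α β ν₁ ν₂ l₁ l₂ l₃ h₁ h₂ h₃ big left right left2 right2
      ihbig ihleft ihright ihleft2 ihright2 =>
    refine CohClosure.coh (l₂ := l') h₁ ?_ h₃ ?_ (ihleft _ (List.Perm.refl _)) ?_ ?_
      (ihright2 _ (List.Perm.refl _))
    · intro he; subst he; exact h₂ hp.eq_nil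
    · exact ihbig _ (by simpa [List.append_assoc] using ((hp.append_right l₃).append_left l₁))
    · exact ihright _ (hp.append_right l₃)
    · exact ihleft2 _ (hp.append_left l₁)
end

section
/- Let f : {0,1}^m → {0,1}^n be an injective adjacency-preserving map (equivalently, the vertex map of a map of symmetric precubical sets □_S[m] → □_S[n]). Then there exists a unique set map f̂ : {1,…,n} → {1,…,m} ∪ {−∞,+∞} such that for every (ε_1,…,ε_m) ∈ {0,1}^m one has f(ε_1,…,ε_m) = (ε_{f̂(1)},…,ε_{f̂(n)}), with the conventions ε_{−∞} = 0 and ε_{+∞} = 1. Moreover, the restriction of f̂ to f̂^{-1}({1,…,m}) is a bijection onto {1,…,m}. -/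
/-- An adjacency-preserving map between cubes: strictly increasing (for the
product order) and taking pairs at Hamming distance 1 to pairs at Hamming
distance 1. -/
def AdjPreserving {m n : ℕ} (f : (Fin m → Bool) → (Fin n → Bool)) : Prop :=
  StrictMono f ∧ ∀ ε ε' : Fin m → Bool,
    hammingDist ε ε' = 1 → hammingDist (f ε) (f ε') = 1

/-- Evaluation of a "generalized index" in `{1,…,m} ∪ {−∞,+∞}` (encoded as
`Fin m ⊕ Bool`, with `Sum.inr false = −∞` and `Sum.inr true = +∞`) on a vertex
`ε ∈ {0,1}^m`, with the conventions `ε_{−∞} = 0` and `ε_{+∞} = 1`. -/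
def evalIdx {m : ℕ} (ε : Fin m → Bool) : Fin m ⊕ Bool → Bool :=
  Sum.elim ε id

open Finset Function

/-- distinct generalized indices give distinct evaluation functions -/
lemma evalIdx_injective {m : ℕ} (x y : Fin m ⊕ Bool)
    (h : ∀ ε : Fin m → Bool, evalIdx ε x = evalIdx ε y) : x = y := by
  cases x with
  | inl j =>
    cases y with
    | inl l =>
      have := h (fun i => decide (i = j))
      simp [evalIdx] at this
      simp [this.symm]
    | inr b =>
      have h1 := h (fun _ => b)
      have h2 := h (fun _ => !b)
      simp [evalIdx] at h1 h2
  | inr b =>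
    cases y with
    | inl l =>
      have h1 := h (fun _ => b)
      have h2 := h (fun _ => !b)
      simp [evalIdx] at h1 h2
    | inr b' =>
      have := h (fun _ => false)
      simpa [evalIdx] using this

lemma update_lt_true {m : ℕ} (a : Fin m → Bool) (j : Fin m) (h : a j = false) :
    a < Function.update a j true := by
  apply lt_of_le_of_ne
  · intro i
    by_cases hij : i = j
    · subst hij; simp [h]
    · simp [Function.update_of_ne hij]
  · intro heq
    have := congrFun heq j
    simp [h] at this

lemma hammingDist_update_true {m : ℕ} (a : Fin m → Bool) (j : Fin m) (h : a j = false) :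
    hammingDist a (Function.update a j true) = 1 := by
  have : ({i | a i ≠ Function.update a j true i} : Finset (Fin m)) = {j} := by
    ext i
    by_cases hij : i = j
    · subst hij; simp [h]
    · simp [Function.update_of_ne hij, hij]
  simp [hammingDist, this]

lemma dist_one_struct {n : ℕ} (x y : Fin n → Bool) (hle : x ≤ y)
    (hd : hammingDist x y = 1) :
    ∃ p, x p = false ∧ y = Function.update x p true := by
  rw [hammingDist, Finset.card_eq_one] at hd
  obtain ⟨p, hp⟩ := hd
  have hmem : ∀ i, (x i ≠ y i ↔ i = p) := by
    intro i
    rw [← Finset.mem_singleton, ← hp, Finset.mem_filter]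
    simp
  have hxp : x p ≠ y p := (hmem p).mpr rfl
  have hlep : x p ≤ y p := hle p
  have hxf : x p = false := by revert hxp hlep; cases x p <;> cases y p <;> simp
  have hyt : y p = true := by revert hxp hlep; cases x p <;> cases y p <;> simp
  refine ⟨p, hxf, ?_⟩
  funext i
  rcases eq_or_ne i p with rfl | hip
  · simp [hyt]
  · have hx : x i = y i := by
      by_contra hne; exact hip ((hmem i).mp hne)
    rw [Function.update_of_ne hip]
    exact hx.symm

lemma square_lemma {m n : ℕ} {f : (Fin m → Bool) → (Fin n → Bool)}
    (hadj : AdjPreserving f) (hinj : Function.Injective f)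
    (a : Fin m → Bool) (j k : Fin m) (hjk : j ≠ k)
    (haj : a j = false) (hak : a k = false) :
    ∃ p q, p ≠ q ∧ f a p = false ∧ f a q = false ∧
      f (Function.update a j true) = Function.update (f a) p true ∧
      f (Function.update a k true) = Function.update (f a) q true ∧
      f (Function.update (Function.update a j true) k true)
        = Function.update (Function.update (f a) p true) q true := by
  obtain ⟨hmono, hdist⟩ := hadj
  set b := Function.update a j true with hb
  set c := Function.update a k true with hc
  set d := Function.update b k true with hd
  have hbk : b k = false := by rw [hb, Function.update_of_ne (Ne.symm hjk)]; exact hak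
  have hcj : c j = false := by rw [hc, Function.update_of_ne hjk]; exact haj
  have hdc : d = Function.update c j true := by
    rw [hd, hb, hc, Function.update_comm hjk]
  -- p
  obtain ⟨p, hfap, hfb⟩ := dist_one_struct (f a) (f b)
    (le_of_lt (hmono (update_lt_true a j haj)))
    (hdist _ _ (hammingDist_update_true a j haj))
  obtain ⟨q, hfaq, hfc⟩ := dist_one_struct (f a) (f c)
    (le_of_lt (hmono (update_lt_true a k hak)))
    (hdist _ _ (hammingDist_update_true a k hak))
  obtain ⟨r, hfbr, hfd1⟩ := dist_one_struct (f b) (f d)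
    (le_of_lt (hmono (update_lt_true b k hbk)))
    (hdist _ _ (hammingDist_update_true b k hbk))
  obtain ⟨s, hfcs, hfd2⟩ := dist_one_struct (f c) (f d)
    (by rw [hdc]; exact le_of_lt (hmono (update_lt_true c j hcj)))
    (by rw [hdc]; exact hdist _ _ (hammingDist_update_true c j hcj))
  have hpq : p ≠ q := by
    rintro rfl
    have : b = c := hinj (by rw [hfb, hfc])
    have := congrFun this j
    rw [hb, hc] at this
    simp [Function.update_of_ne hjk, haj] at this
  have hrp : r ≠ p := by
    rintro rfl
    rw [hfb] at hfbr; simp at hfbr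
  have hsq : s ≠ q := by
    rintro rfl
    rw [hfc] at hfcs; simp at hfcs
  have heq : Function.update (f b) r true = Function.update (f c) s true := by
    rw [← hfd1, ← hfd2]
  have hps : p = s := by
    have h1 := congrFun heq p
    rw [Function.update_of_ne (Ne.symm hrp), hfb] at h1
    simp at h1
    by_contra h'
    rw [Function.update_of_ne h', hfc, Function.update_of_ne hpq, hfap] at h1
    simp at h1
  have hqr : q = r := by
    have h2 := congrFun heq q
    rw [Function.update_of_ne (Ne.symm hsq), hfc] at h2
    simp at h2
    by_contra h'
    rw [Function.update_of_ne h', hfb, Function.update_of_ne (Ne.symm hpq), hfaq] at h2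
    simp at h2
  refine ⟨p, q, hpq, hfap, hfaq, hfb, hfc, ?_⟩
  rw [hfd1, hqr, hfb]

lemma filter_update_false {m : ℕ} (ε : Fin m → Bool) (k : Fin m) :
    ({i | Function.update ε k false i = true} : Finset (Fin m))
      = ({i | ε i = true} : Finset (Fin m)).erase k := by
  ext i
  rcases eq_or_ne i k with rfl | hik
  · simp
  · simp [Function.update_of_ne hik, hik]

lemma flip_lemma {m n : ℕ} {f : (Fin m → Bool) → (Fin n → Bool)}
    (hadj : AdjPreserving f) (hinj : Function.Injective f) (Φ : Fin m → Fin n)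
    (hΦ1 : ∀ j, f (fun _ => false) (Φ j) = false)
    (hΦ2 : ∀ j, f (Function.update (fun _ => false) j true)
      = Function.update (f (fun _ => false)) (Φ j) true) :
    ∀ (N : ℕ) (ε : Fin m → Bool), ({i | ε i = true} : Finset (Fin m)).card = N →
      ∀ j, ε j = false →
        f ε (Φ j) = false ∧
        f (Function.update ε j true) = Function.update (f ε) (Φ j) true := by
  intro N
  induction N with
  | zero =>
    intro ε hcard j hj
    have hbot : ε = fun _ => false := by
      funext i
      rw [Finset.card_eq_zero] at hcard
      by_contra hi
      have hit : ε i = true := by cases h : ε i <;> simp_all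
      have : i ∈ ({i | ε i = true} : Finset (Fin m)) := by simpa using hit
      rw [hcard] at this
      simp at this
    subst hbot
    exact ⟨hΦ1 j, hΦ2 j⟩
  | succ N ih =>
    intro ε hcard j hj
    have hne : ({i | ε i = true} : Finset (Fin m)).Nonempty := by
      rw [← Finset.card_pos, hcard]; omega
    obtain ⟨k, hk⟩ := hne
    have hk : ε k = true := by simpa using hk
    have hjk : j ≠ k := by rintro rfl; rw [hj] at hk; simp at hk
    set a := Function.update ε k false with ha
    have haj : a j = false := by rw [ha, Function.update_of_ne hjk]; exact hj
    have hak : a k = false := by rw [ha]; simp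
    have hcarda : ({i | a i = true} : Finset (Fin m)).card = N := by
      rw [ha, filter_update_false, Finset.card_erase_of_mem (by simpa using hk), hcard]
      omega
    have IHj := ih a hcarda j haj
    have IHk := ih a hcarda k hak
    have hεa : ε = Function.update a k true := by
      funext i
      rcases eq_or_ne i k with rfl | hik
      · simp [hk]
      · rw [Function.update_of_ne hik, ha, Function.update_of_ne hik]
    obtain ⟨p, q, hpq, hfap, hfaq, hfb, hfc, hfd⟩ :=
      square_lemma hadj hinj a j k hjk haj hak
    have hp : p = Φ j := by
      have heq := hfb.symm.trans IHj.2
      by_contra h'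
      have := congrFun heq p
      rw [Function.update_of_ne h', hfap] at this
      simp [hfap] at this
    have hq : q = Φ k := by
      have heq := hfc.symm.trans IHk.2
      by_contra h'
      have := congrFun heq q
      rw [Function.update_of_ne h', hfaq] at this
      simp [hfaq] at this
    have hΦjk : Φ j ≠ Φ k := by rw [← hp, ← hq]; exact hpq
    constructor
    · rw [hεa, IHk.2, Function.update_of_ne hΦjk]
      exact IHj.1
    · have hcomm : Function.update ε j true
          = Function.update (Function.update a j true) k true := by
        rw [hεa, Function.update_comm hjk]
      rw [hcomm, hfd, hp, hq, hεa, IHk.2, Function.update_comm hΦjk]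

lemma formula_lemma {m n : ℕ} {f : (Fin m → Bool) → (Fin n → Bool)}
    (hadj : AdjPreserving f) (hinj : Function.Injective f) (Φ : Fin m → Fin n)
    (hΦ1 : ∀ j, f (fun _ => false) (Φ j) = false)
    (hΦ2 : ∀ j, f (Function.update (fun _ => false) j true)
      = Function.update (f (fun _ => false)) (Φ j) true)
    (fhat : Fin n → Fin m ⊕ Bool)
    (hfhat1 : ∀ j, fhat (Φ j) = Sum.inl j)
    (hfhat2 : ∀ i, (∀ j, Φ j ≠ i) → fhat i = Sum.inr (f (fun _ => false) i)) :
    ∀ (N : ℕ) (ε : Fin m → Bool), ({i | ε i = true} : Finset (Fin m)).card = N →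
      ∀ i, f ε i = evalIdx ε (fhat i) := by
  intro N
  induction N with
  | zero =>
    intro ε hcard i
    have hbot : ε = fun _ => false := by
      funext i'
      rw [Finset.card_eq_zero] at hcard
      by_contra hi
      have hit : ε i' = true := by cases h : ε i' <;> simp_all
      have : i' ∈ ({i | ε i = true} : Finset (Fin m)) := by simpa using hit
      rw [hcard] at this
      simp at this
    subst hbot
    by_cases h : ∃ j, Φ j = i
    · obtain ⟨j, rfl⟩ := h
      rw [hfhat1 j, hΦ1 j]
      simp [evalIdx]
    · push_neg at h
      rw [hfhat2 i h]
      simp [evalIdx]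
  | succ N ih =>
    intro ε hcard i
    have hne : ({i | ε i = true} : Finset (Fin m)).Nonempty := by
      rw [← Finset.card_pos, hcard]; omega
    obtain ⟨k, hk⟩ := hne
    have hk : ε k = true := by simpa using hk
    set a := Function.update ε k false with ha
    have hak : a k = false := by rw [ha]; simp
    have hcarda : ({i | a i = true} : Finset (Fin m)).card = N := by
      rw [ha, filter_update_false, Finset.card_erase_of_mem (by simpa using hk), hcard]
      omega
    have hεa : ε = Function.update a k true := by
      funext i'
      rcases eq_or_ne i' k with rfl | hik
      · simp [hk]
      · rw [Function.update_of_ne hik, ha, Function.update_of_ne hik]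
    have hflip := flip_lemma hadj hinj Φ hΦ1 hΦ2 N a hcarda k hak
    by_cases hik : i = Φ k
    · subst hik
      rw [hεa, hflip.2]
      rw [hfhat1 k]
      simp [evalIdx, hεa]
    · have h1 : f ε i = f a i := by
        rw [hεa, hflip.2, Function.update_of_ne hik]
      rw [h1, ih a hcarda i]
      by_cases h : ∃ j, Φ j = i
      · obtain ⟨j, rfl⟩ := h
        rw [hfhat1 j]
        have hjk : j ≠ k := by rintro rfl; exact hik rfl
        simp only [evalIdx, Sum.elim_inl]
        rw [ha, Function.update_of_ne hjk]
      · push_neg at h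
        rw [hfhat2 i h]
        simp [evalIdx]

/-- Every injective adjacency-preserving map `f : {0,1}^m → {0,1}^n` has a
unique index map `f̂ : {1,…,n} → {1,…,m} ∪ {−∞,+∞}` such that
`f(ε_1,…,ε_m) = (ε_{f̂(1)},…,ε_{f̂(n)})` with the conventions `ε_{−∞} = 0` and
`ε_{+∞} = 1`; moreover the restriction of `f̂` to `f̂⁻¹({1,…,m})` is a
bijection onto `{1,…,m}`. -/
theorem exists_unique_index_map (m n : ℕ) (f : (Fin m → Bool) → (Fin n → Bool))
    (hadj : AdjPreserving f) (hinj : Function.Injective f) :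
    (∃! fhat : Fin n → Fin m ⊕ Bool,
      ∀ (ε : Fin m → Bool) (i : Fin n), f ε i = evalIdx ε (fhat i)) ∧
    ∀ fhat : Fin n → Fin m ⊕ Bool,
      (∀ (ε : Fin m → Bool) (i : Fin n), f ε i = evalIdx ε (fhat i)) →
      ∀ j : Fin m, ∃! i : Fin n, fhat i = Sum.inl j := by
  have hΦex : ∀ j : Fin m, ∃ p, f (fun _ => false) p = false ∧
      f (Function.update (fun _ => false) j true)
        = Function.update (f (fun _ => false)) p true := fun j =>
    dist_one_struct _ _ (le_of_lt (hadj.1 (update_lt_true _ j rfl)))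
      (hadj.2 _ _ (hammingDist_update_true _ j rfl))
  choose Φ hΦ1 hΦ2 using hΦex
  have hΦinj : Function.Injective Φ := by
    intro j l hjl
    have hfe : f (Function.update (fun _ => false) j true)
        = f (Function.update (fun _ => false) l true) := by
      rw [hΦ2 j, hΦ2 l, hjl]
    have he := hinj hfe
    by_contra h'
    have := congrFun he j
    rw [Function.update_self, Function.update_of_ne h'] at this
    simp at this
  set fhat : Fin n → Fin m ⊕ Bool := fun i =>
    if h : ∃ j, Φ j = i then Sum.inl h.choose
    else Sum.inr (f (fun _ => false) i) with hfhatdef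
  have hfhat1 : ∀ j, fhat (Φ j) = Sum.inl j := by
    intro j
    have h : ∃ j', Φ j' = Φ j := ⟨j, rfl⟩
    simp only [hfhatdef, dif_pos h]
    exact congrArg Sum.inl (hΦinj h.choose_spec)
  have hfhat2 : ∀ i, (∀ j, Φ j ≠ i) → fhat i = Sum.inr (f (fun _ => false) i) := by
    intro i hi
    simp only [hfhatdef]
    rw [dif_neg]
    rintro ⟨j, hj⟩
    exact hi j hj
  have hform : ∀ (ε : Fin m → Bool) (i : Fin n), f ε i = evalIdx ε (fhat i) :=
    fun ε i => formula_lemma hadj hinj Φ hΦ1 hΦ2 fhat hfhat1 hfhat2 _ ε rfl i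
  constructor
  · exact ⟨fhat, hform, fun g hg => funext fun i =>
      evalIdx_injective _ _ (fun ε => by rw [← hg ε i, ← hform ε i])⟩
  · intro g hg j
    have hd := hadj.2 (fun _ => false) (Function.update (fun _ => false) j true)
      (hammingDist_update_true _ j rfl)
    rw [hammingDist, Finset.card_eq_one] at hd
    obtain ⟨p, hp⟩ := hd
    have hiff : ∀ i, (f (fun _ => false) i
        ≠ f (Function.update (fun _ => false) j true) i) ↔ g i = Sum.inl j := by
      intro i
      rw [hg _ i, hg _ i]
      cases hgi : g i with
      | inl l =>
        simp only [evalIdx, Sum.elim_inl]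
        rcases eq_or_ne l j with rfl | h
        · simp
        · simp [Function.update_of_ne h, h]
      | inr b => simp [evalIdx]
    refine ⟨p, ?_, ?_⟩
    · show g p = Sum.inl j
      rw [← hiff p]
      have : p ∈ ({i | f (fun _ => false) i
          ≠ f (Function.update (fun _ => false) j true) i} : Finset (Fin n)) := by
        rw [hp]; simp
      simpa using this
    · intro i hi
      have : i ∈ ({i | f (fun _ => false) i
          ≠ f (Function.update (fun _ => false) j true) i} : Finset (Fin n)) := by
        simpa using (hiff i).mpr hi
      rw [hp] at this
      simpa using this
end

section
/- Let m,n ≥ 0, a_1,…,a_m, b_1,…,b_n ∈ Σ, and let f : {0,1}^m → {0,1}^n be an injective adjacency-preserving map with index map f̂ and with f̄ : f̂^{-1}({1,…,m}) → {1,…,m} the induced bijection. Assume the label compatibility a_i = b_{f̄^{-1}(i)} for every i ∈ {1,…,m}. Then the pair consisting of f_0 = f on states and f̃(a_i,i) = (a_i, f̄^{-1}(i)) on actions defines a morphism of weak higher dimensional transition systems C_m[a_1,…,a_m] → C_n[b_1,…,b_n]: it takes every transition of C_m[a_1,…,a_m] to a transition of C_n[b_1,…,b_n]. -/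
universe u u1 u2 u3 u4 u5 u6

/-
A map of cubes given by an index map reads each coordinate of its value off a single
coordinate of its argument, or is constant in that coordinate. Hence it is monotone, and
the coordinates in which the images of `α ≤ β` differ are exactly the `s j` with
`α j ≠ β j`: the image of a transition with actions `l` is a transition with actions
`l.map s`.
-/

section IndexMap

variable {m n : ℕ}

theorem evalIdx_mono {α β : Fin m → Bool} (hle : α ≤ β) (x : Fin m ⊕ Bool) :
    evalIdx α x ≤ evalIdx β x := by
  cases x with
  | inl j => exact hle j
  | inr c => exact le_rfl

theorem evalIdx_ne_evalIdx_iff {α β : Fin m → Bool} {x : Fin m ⊕ Bool} :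
    evalIdx α x ≠ evalIdx β x ↔ ∃ j, x = Sum.inl j ∧ α j ≠ β j := by
  cases x <;> simp [evalIdx]

variable {fhat : Fin n → Fin m ⊕ Bool} {s : Fin m → Fin n}
  (hs : ∀ j, fhat (s j) = Sum.inl j) (hs' : ∀ i j, fhat i = Sum.inl j → i = s j)
include hs

theorem injective_of_index_section : Function.Injective s :=
  fun j j' h => Sum.inl_injective ((hs j).symm.trans (h ▸ hs j'))

include hs' in
theorem eq_section_iff_index_eq {i : Fin n} {j : Fin m} : i = s j ↔ fhat i = Sum.inl j :=
  ⟨fun h => h ▸ hs j, hs' i j⟩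

include hs' in
theorem cubeT_map_index {α β : Fin m → Bool} {l : List (Fin m)} (h : CubeT m α l β) :
    CubeT n (fun i => evalIdx α (fhat i)) (l.map s) (fun i => evalIdx β (fhat i)) := by
  obtain ⟨hne, hnd, hle, hiff⟩ := h
  refine ⟨by simpa using hne, hnd.map (injective_of_index_section hs),
    fun i => evalIdx_mono hle (fhat i), fun i => ?_⟩
  simp only [evalIdx_ne_evalIdx_iff, List.mem_map, hiff, eq_comm (a := s _),
    eq_section_iff_index_eq hs hs', and_comm]

def cubeHomOfIndex {Λ : Type u} (a : Fin m → Λ) (b : Fin n → Λ) (hlabel : ∀ j, a j = b (s j)) :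
    (cube m a).Hom (cube n b) where
  f0 ε i := evalIdx ε (fhat i)
  fa := s
  label j := (hlabel j).symm
  map _ _ _ := cubeT_map_index hs hs'

end IndexMap

theorem index_map_induces_cube_morphism_general {Λ : Type u} (m n : ℕ)
    (a : Fin m → Λ) (b : Fin n → Λ)
    (f : (Fin m → Bool) → (Fin n → Bool))
    (fhat : Fin n → Fin m ⊕ Bool) (s : Fin m → Fin n)
    (hf : ∀ (ε : Fin m → Bool) (i : Fin n), f ε i = evalIdx ε (fhat i))
    (hs : ∀ j : Fin m, fhat (s j) = Sum.inl j)
    (hs' : ∀ (i : Fin n) (j : Fin m), fhat i = Sum.inl j → i = s j)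
    (hlabel : ∀ j : Fin m, a j = b (s j)) :
    ∃ F : (cube m a).Hom (cube n b), F.f0 = f ∧ F.fa = s :=
  ⟨cubeHomOfIndex hs hs' a b hlabel, funext fun ε => funext fun i => (hf ε i).symm, rfl⟩

/-- Let `f : {0,1}^m → {0,1}^n` be an injective adjacency-preserving map, with
index map `f̂` and with `s = f̄⁻¹ : {1,…,m} → {1,…,n}` the inverse of the
bijection induced by `f̂` on `f̂⁻¹({1,…,m})`. If the labels are compatible,
i.e. `a_i = b_{f̄⁻¹(i)}` for all `i`, then the pair consisting of `f` on
states and `(a_i, i) ↦ (a_i, f̄⁻¹(i))` on actions defines a morphism of weak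
higher dimensional transition systems `C_m[a_1,…,a_m] → C_n[b_1,…,b_n]`. -/
theorem index_map_induces_cube_morphism {Λ : Type u} (m n : ℕ)
    (a : Fin m → Λ) (b : Fin n → Λ)
    (f : (Fin m → Bool) → (Fin n → Bool))
    (hadj : AdjPreserving f) (hinj : Function.Injective f)
    (fhat : Fin n → Fin m ⊕ Bool) (s : Fin m → Fin n)
    (hf : ∀ (ε : Fin m → Bool) (i : Fin n), f ε i = evalIdx ε (fhat i))
    (hs : ∀ j : Fin m, fhat (s j) = Sum.inl j)
    (hs' : ∀ (i : Fin n) (j : Fin m), fhat i = Sum.inl j → i = s j)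
    (hlabel : ∀ j : Fin m, a j = b (s j)) :
    ∃ F : (cube m a).Hom (cube n b), F.f0 = f ∧ F.fa = s :=
  index_map_induces_cube_morphism_general m n a b f fhat s hf hs hs' hlabel
end

section
/- For all m,n ≥ 0 and a_1,…,a_m, b_1,…,b_n ∈ Σ, the assignment f ↦ (f, f̃), where f̃(a_i,i) = (a_i, f̄^{-1}(i)), is a bijection from the set of injective adjacency-preserving maps f : {0,1}^m → {0,1}^n satisfying the label compatibility a_i = b_{f̄^{-1}(i)} for all i ∈ {1,…,m}, onto the set of morphisms of weak higher dimensional transition systems C_m[a_1,…,a_m] → C_n[b_1,…,b_n]. (In particular, the full subcategory of labelled cubes in labelled symmetric precubical sets is isomorphic to the full subcategory of labelled cubes in weak higher dimensional transition systems.) -/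
universe u u1 u2 u3 u4 u5 u6

/-- `s : {1,…,m} → {1,…,n}` is the inverse index map `f̄⁻¹` of
`f : {0,1}^m → {0,1}^n`: the coordinate `s j` of `f ε` is `ε j`, and every
coordinate of `f` is either constant (index `−∞` or `+∞`) or of the form
`s j`. -/
def IsIndexInv {m n : ℕ} (f : (Fin m → Bool) → (Fin n → Bool))
    (s : Fin m → Fin n) : Prop :=
  (∀ (ε : Fin m → Bool) (j : Fin m), f ε (s j) = ε j) ∧
    ∀ k : Fin n, (∀ ε ε' : Fin m → Bool, f ε k = f ε' k) ∨ ∃ j, s j = k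

/-
A morphism `h` of cubes sends the edge `ε[j := 0] → ε[j := 1]`, a transition labelled by the
single action `j`, to a transition labelled by the single action `h.fa j`. So `h.f0` changes
exactly the coordinate `h.fa j` along that edge, from `0` to `1`: the coordinate `h.fa j` of
`h.f0 ε` is `ε j`, and a coordinate outside the image of `h.fa` never changes along an edge, hence
is constant. Thus `h.fa` is the inverse index map of `h.f0`. Conversely, a map `f` with inverse
index map `s` sends transitions to transitions, acting by `s` on actions. The inverse index map
of `f` is unique, so `f ↦ (f, s)` is a bijection.
-/

open Function

theorem eq_of_forall_bool_apply_eq {ι : Type*} [DecidableEq ι] {i j : ι}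
    (h : ∀ ε : ι → Bool, ε i = ε j) : i = j := by
  simpa using h (fun k => decide (k = j))

theorem apply_eq_of_forall_apply_update_eq {ι γ : Type*} [Fintype ι] [DecidableEq ι]
    {β : ι → Type*} {g : (∀ i, β i) → γ} (hg : ∀ x i y, g (update x i y) = g x)
    (x x' : ∀ i, β i) : g x = g x' := by
  have key : ∀ s : Finset ι, g (s.piecewise x x') = g x' := by
    intro s
    induction s using Finset.induction_on with
    | empty => simp
    | insert i s _ ih => rw [Finset.piecewise_insert, hg, ih]
  simpa using key Finset.univ

namespace IsIndexInv

variable {m n : ℕ} {f : (Fin m → Bool) → (Fin n → Bool)} {s : Fin m → Fin n}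

theorem injective_index (h : IsIndexInv f s) : Injective s := by
  intro j j' hjj'
  refine eq_of_forall_bool_apply_eq fun ε => ?_
  rw [← h.1 ε j, ← h.1 ε j', hjj']

theorem injective (h : IsIndexInv f s) : Injective f := by
  intro ε ε' hf
  funext j
  rw [← h.1 ε j, ← h.1 ε' j, hf]

theorem unique {s' : Fin m → Fin n} (h : IsIndexInv f s) (h' : IsIndexInv f s') : s = s' := by
  funext j
  rcases h'.2 (s j) with hconst | ⟨j', hj'⟩
  · have := hconst (fun _ => false) (fun _ => true)
    rw [h.1, h.1] at this
    exact absurd this Bool.false_ne_true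
  · have hjj' : j' = j := eq_of_forall_bool_apply_eq fun ε => by rw [← h'.1 ε j', hj', h.1 ε j]
    rw [← hj', hjj']

theorem apply_ne_iff (h : IsIndexInv f s) (ε ε' : Fin m → Bool) (k : Fin n) :
    f ε k ≠ f ε' k ↔ ∃ j, ε j ≠ ε' j ∧ s j = k := by
  rcases h.2 k with hconst | ⟨j, rfl⟩
  · simp only [hconst ε ε', ne_eq, not_true_eq_false, false_iff, not_exists, not_and]
    intro j hj hjk
    rw [← h.1 ε j, ← h.1 ε' j, hjk, hconst ε ε'] at hj
    exact hj rfl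
  · simp only [h.1, h.injective_index.eq_iff, exists_eq_right]

theorem monotone (h : IsIndexInv f s) : Monotone f := by
  intro ε ε' hle k
  rcases h.2 k with hconst | ⟨j, rfl⟩
  · rw [hconst ε ε']
  · rw [h.1 ε j, h.1 ε' j]
    exact hle j

theorem hammingDist_eq (h : IsIndexInv f s) (ε ε' : Fin m → Bool) :
    hammingDist (f ε) (f ε') = hammingDist ε ε' := by
  have hdiff : ({k | f ε k ≠ f ε' k} : Finset (Fin n)) =
      ({j | ε j ≠ ε' j} : Finset (Fin m)).image s := by
    ext k
    simp [h.apply_ne_iff]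
  rw [hammingDist, hammingDist, hdiff, Finset.card_image_of_injective _ h.injective_index]

theorem adjPreserving (h : IsIndexInv f s) : AdjPreserving f :=
  ⟨h.monotone.strictMono_of_injective h.injective, fun ε ε' hd => by rw [h.hammingDist_eq, hd]⟩

theorem cubeT_map (h : IsIndexInv f s) {ε ε' : Fin m → Bool} {l : List (Fin m)}
    (ht : CubeT m ε l ε') : CubeT n (f ε) (l.map s) (f ε') := by
  obtain ⟨hne, hnd, hle, hdiff⟩ := ht
  refine ⟨by simpa using hne, hnd.map h.injective_index, fun k => h.monotone hle k, fun k => ?_⟩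
  simp [h.apply_ne_iff, hdiff]

def toCubeHom {Λ : Type*} {a : Fin m → Λ} {b : Fin n → Λ} (h : IsIndexInv f s)
    (hab : ∀ j, a j = b (s j)) : (cube m a).Hom (cube n b) where
  f0 := f
  fa := s
  label j := (hab j).symm
  map _ _ _ := h.cubeT_map

end IsIndexInv

theorem cubeT_update (m : ℕ) (ε : Fin m → Bool) (j : Fin m) :
    CubeT m (update ε j false) [j] (update ε j true) := by
  refine ⟨List.cons_ne_nil _ _, List.nodup_singleton _, fun i => ?_, fun i => ?_⟩ <;>
    rcases eq_or_ne i j with rfl | hij <;> simp [update_of_ne, *]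

theorem CubeT.of_singleton {n : ℕ} {x y : Fin n → Bool} {k : Fin n} (ht : CubeT n x [k] y) :
    x k = false ∧ y k = true ∧ ∀ i ≠ k, x i = y i := by
  obtain ⟨-, -, hle, hdiff⟩ := ht
  have hlt : x k < y k := (hle k).lt_of_ne ((hdiff k).2 (List.mem_singleton_self k))
  exact ⟨(Bool.lt_iff.1 hlt).1, (Bool.lt_iff.1 hlt).2,
    fun i hi => not_not.1 fun hne => hi (List.mem_singleton.1 ((hdiff i).1 hne))⟩

attribute [ext] TransSys.Hom

namespace TransSys.Hom

variable {Λ : Type*} {m n : ℕ} {a : Fin m → Λ} {b : Fin n → Λ}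

theorem map_edge (h : (cube m a).Hom (cube n b)) (ε : Fin m → Bool) (j : Fin m) :
    h.f0 (update ε j false) (h.fa j) = false ∧ h.f0 (update ε j true) (h.fa j) = true ∧
      ∀ k ≠ h.fa j, h.f0 (update ε j false) k = h.f0 (update ε j true) k :=
  (h.map _ [j] _ (cubeT_update m ε j)).of_singleton

theorem isIndexInv (h : (cube m a).Hom (cube n b)) : IsIndexInv h.f0 h.fa := by
  refine ⟨fun ε j => ?_, fun k => or_iff_not_imp_right.2 fun hk => ?_⟩
  · conv_lhs => rw [← update_eq_self j ε]
    cases ε j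
    · exact (h.map_edge ε j).1
    · exact (h.map_edge ε j).2.1
  · push Not at hk
    have edge : ∀ ε j, h.f0 (update ε j false) k = h.f0 (update ε j true) k :=
      fun ε j => (h.map_edge ε j).2.2 k (hk j).symm
    refine apply_eq_of_forall_apply_update_eq (g := fun ε => h.f0 ε k) fun ε j y => ?_
    conv_rhs => rw [← update_eq_self j ε]
    cases y <;> cases ε j <;> simp only [edge]

theorem exists_isIndexInv (h : (cube m a).Hom (cube n b)) :
    ∃ s, IsIndexInv h.f0 s ∧ ∀ j, a j = b (s j) :=
  ⟨h.fa, h.isIndexInv, fun j => (h.label j).symm⟩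

end TransSys.Hom

/-- The assignment `f ↦ (f, f̃)`, where `f̃(a_i,i) = (a_i, f̄⁻¹(i))`, is a
bijection from the set of injective adjacency-preserving maps
`f : {0,1}^m → {0,1}^n` satisfying the label compatibility
`a_i = b_{f̄⁻¹(i)}` onto the set of morphisms of weak higher dimensional
transition systems `C_m[a_1,…,a_m] → C_n[b_1,…,b_n]`. -/
theorem cubes_equiv {Λ : Type u} (m n : ℕ) (a : Fin m → Λ) (b : Fin n → Λ) :
    ∃ e : {f : (Fin m → Bool) → (Fin n → Bool) //
        AdjPreserving f ∧ Function.Injective f ∧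
          ∃ s : Fin m → Fin n, IsIndexInv f s ∧ ∀ j, a j = b (s j)} ≃
        (cube m a).Hom (cube n b),
      ∀ x, (e x).f0 = x.1 ∧ ∀ s : Fin m → Fin n, IsIndexInv x.1 s → (e x).fa = s := by
  refine ⟨
    { toFun := fun x => x.2.2.2.choose_spec.1.toCubeHom x.2.2.2.choose_spec.2
      invFun := fun h => ⟨h.f0, h.isIndexInv.adjPreserving, h.isIndexInv.injective,
        h.exists_isIndexInv⟩
      left_inv := fun x => rfl
      right_inv := fun h =>
        TransSys.Hom.ext rfl (h.exists_isIndexInv.choose_spec.1.unique h.isIndexInv) },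
    fun x => ⟨rfl, fun s hs => x.2.2.2.choose_spec.1.unique hs⟩⟩
end

section
/- Let f = (f_0, f̃) : C_m[a_1,…,a_m] → C_n[b_1,…,b_n] be a morphism of weak higher dimensional transition systems. Then: (1) there is a set map f_* : {1,…,m} → {1,…,n} such that f̃(a_i,i) = (a_i, f_*(i)) for all i (so b_{f_*(i)} = a_i), and f_* is injective; (2) the state map f_0 : {0,1}^m → {0,1}^n is strictly increasing and adjacency-preserving; moreover if (ε) and (ε') differ exactly in coordinate j, then f_0(ε) and f_0(ε') differ exactly in coordinate f_*(j). -/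
/-!
A morphism sends transitions to transitions, and in a cube a transition `ε → ε'` exists
exactly when `ε < ε'`, its actions being the coordinates where they differ. So the image of
the one-action transition across coordinate `j` is a one-action transition across `f̃ j`,
the image of a transition with actions `i ≠ j` has the distinct actions `f̃ i ≠ f̃ j`, and
the image of any transition `ε → ε'` witnesses `f₀ ε < f₀ ε'`.
-/

universe u u1 u2 u3 u4 u5 u6

theorem hammingDist_eq_one_iff {ι : Type*} [Fintype ι] {β : ι → Type*} [∀ i, DecidableEq (β i)]
    {x y : ∀ i, β i} : hammingDist x y = 1 ↔ ∃ j, ∀ k, x k ≠ y k ↔ k = j := by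
  simp only [hammingDist, Finset.card_eq_one, Finset.ext_iff, Finset.mem_filter,
    Finset.mem_univ, true_and, Finset.mem_singleton]

theorem Pi.le_or_ge_of_forall_ne_iff {ι α : Type*} [LinearOrder α] {x y : ι → α} {j : ι}
    (hd : ∀ k, x k ≠ y k ↔ k = j) : x ≤ y ∨ y ≤ x := by
  have heq : ∀ k, k ≠ j → x k = y k := fun k hk => not_not.1 (mt (hd k).1 hk)
  rcases le_total (x j) (y j) with h | h
  · refine .inl fun k => ?_
    rcases eq_or_ne k j with rfl | hk
    exacts [h, (heq k hk).le]
  · refine .inr fun k => ?_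
    rcases eq_or_ne k j with rfl | hk
    exacts [h, (heq k hk).ge]

namespace CubeT

variable {n : ℕ} {ε ε' : Fin n → Bool} {l : List (Fin n)}

theorem lt (h : CubeT n ε l ε') : ε < ε' := by
  obtain ⟨hne, -, hle, hmem⟩ := h
  obtain ⟨i, hi⟩ := List.exists_mem_of_ne_nil l hne
  exact lt_of_le_of_ne hle fun heq => (hmem i).2 hi (congrFun heq i)

theorem of_lt (h : ε < ε') : CubeT n ε (Finset.univ.filter fun i => ε i ≠ ε' i).toList ε' := by
  have hmem : ∀ i, ε i ≠ ε' i ↔ i ∈ (Finset.univ.filter fun i => ε i ≠ ε' i).toList := by simp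
  refine ⟨?_, Finset.nodup_toList _, h.le, hmem⟩
  obtain ⟨i, hi⟩ := Function.ne_iff.1 h.ne
  exact List.ne_nil_of_mem ((hmem i).1 hi)

theorem singleton_iff {j : Fin n} :
    CubeT n ε [j] ε' ↔ ε ≤ ε' ∧ ∀ k, ε k ≠ ε' k ↔ k = j := by
  simp [CubeT, Pi.le_def]

theorem of_nodup (hne : l ≠ []) (hnd : l.Nodup) : CubeT n ⊥ l (fun i => decide (i ∈ l)) :=
  ⟨hne, hnd, fun _ => Bool.false_le _, fun i => by simp⟩

end CubeT

namespace TransSys.Hom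

variable {Λ : Type u} {m n : ℕ} {a : Fin m → Λ} {b : Fin n → Λ} (F : (cube m a).Hom (cube n b))

theorem strictMono_f0_of_cube : StrictMono F.f0 := fun _ _ h =>
  (F.map _ _ _ (CubeT.of_lt h)).lt

theorem injective_fa_of_cube : Function.Injective F.fa := by
  intro i j hij
  by_contra hne
  have hnd := (F.map _ _ _ (CubeT.of_nodup (List.cons_ne_nil i [j]) (by simpa using hne))).2.1
  simp [hij] at hnd

theorem f0_ne_iff_of_cube {ε ε' : Fin m → Bool} {j : Fin m} (hd : ∀ k, ε k ≠ ε' k ↔ k = j)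
    (k : Fin n) : F.f0 ε k ≠ F.f0 ε' k ↔ k = F.fa j := by
  have of_le : ∀ {δ δ' : Fin m → Bool}, δ ≤ δ' → (∀ k, δ k ≠ δ' k ↔ k = j) →
      ∀ k, F.f0 δ k ≠ F.f0 δ' k ↔ k = F.fa j := fun hle hd =>
    (CubeT.singleton_iff.1 (F.map _ _ _ (CubeT.singleton_iff.2 ⟨hle, hd⟩))).2
  rcases Pi.le_or_ge_of_forall_ne_iff hd with h | h
  · exact of_le h hd k
  · simpa only [ne_comm] using of_le h (by simpa only [ne_comm] using hd) k

theorem hammingDist_f0_of_cube {ε ε' : Fin m → Bool} (h : hammingDist ε ε' = 1) :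
    hammingDist (F.f0 ε) (F.f0 ε') = 1 :=
  have ⟨j, hd⟩ := hammingDist_eq_one_iff.1 h
  hammingDist_eq_one_iff.2 ⟨F.fa j, F.f0_ne_iff_of_cube hd⟩

end TransSys.Hom

/-- Every morphism `F = (f₀, f̃) : C_m[a_1,…,a_m] → C_n[b_1,…,b_n]` of weak
higher dimensional transition systems satisfies: (1) its action map is of the
form `f̃(a_i,i) = (a_i, f_*(i))` (built into the encoding) with
`b_{f_*(i)} = a_i`, and `f_*` is injective; (2) its state map `f₀` is
strictly increasing and adjacency-preserving; moreover, if `ε` and `ε'` differ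
exactly in coordinate `j`, then `f₀(ε)` and `f₀(ε')` differ exactly in
coordinate `f_*(j)`. -/
theorem cube_morphism_properties {Λ : Type u} (m n : ℕ)
    (a : Fin m → Λ) (b : Fin n → Λ) (F : (cube m a).Hom (cube n b)) :
    (Function.Injective F.fa ∧ ∀ i : Fin m, b (F.fa i) = a i) ∧
    StrictMono F.f0 ∧
    (∀ ε ε' : Fin m → Bool,
      hammingDist ε ε' = 1 → hammingDist (F.f0 ε) (F.f0 ε') = 1) ∧
    ∀ (ε ε' : Fin m → Bool) (j : Fin m), (∀ k, ε k ≠ ε' k ↔ k = j) →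
      ∀ k : Fin n, F.f0 ε k ≠ F.f0 ε' k ↔ k = F.fa j :=
  ⟨⟨F.injective_fa_of_cube, F.label⟩, F.strictMono_f0_of_cube,
    fun _ _ => F.hammingDist_f0_of_cube, fun _ _ _ => F.f0_ne_iff_of_cube⟩
end

section
/- Let f : {0,1}^m → {0,1}^n be an adjacency-preserving map (strictly increasing and taking pairs at Hamming distance 1 to pairs at Hamming distance 1). Then f is a (possibly empty) composite of face maps δ_i^α and symmetry maps σ_i if and only if f is injective. -/
/-- The maps `{0,1}^m → {0,1}^n` that are (possibly empty) composites of face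
maps `δ_i^α` (insertion of the value `α` at position `i`) and symmetry maps
`σ_i` (exchange of two adjacent coordinates `i` and `i+1`). -/
inductive IsCubeMap : (m n : ℕ) → ((Fin m → Bool) → (Fin n → Bool)) → Prop
  | id (m : ℕ) : IsCubeMap m m (fun x => x)
  | face {m n : ℕ} (i : Fin (n + 1)) (b : Bool)
      {f : (Fin m → Bool) → (Fin n → Bool)} :
      IsCubeMap m n f → IsCubeMap m (n + 1) (fun x => i.insertNth b (f x))
  | symm {m n : ℕ} (i j : Fin n) (hij : (j : ℕ) = (i : ℕ) + 1)
      {f : (Fin m → Bool) → (Fin n → Bool)} :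
      IsCubeMap m n f → IsCubeMap m n (fun x k => f x (Equiv.swap i j k))

/-! Raising coordinate `i` of `ε` raises exactly one coordinate `κ(ε, i)` of `f ε`, since `f` is
strictly increasing and preserves adjacency. Going around a square
`ε, ε + eᵢ, ε + eⱼ, ε + eᵢ + eⱼ` both ways and using injectivity shows that `κ(ε, i)` does not
depend on `ε`, so `f` copies input `i` to output `κ i` and is constant on the outputs outside the
range of `κ`. Such a map is a face map for each constant output followed by a permutation of the
outputs, and permutations are products of adjacent transpositions. -/

open Function

theorem hammingDist_update_of_ne {ι : Type*} [Fintype ι] [DecidableEq ι] {β : ι → Type*}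
    [∀ i, DecidableEq (β i)] (x : ∀ i, β i) {i : ι} {b : β i} (h : x i ≠ b) :
    hammingDist x (update x i b) = 1 :=
  Finset.card_eq_one.2 ⟨i, by ext j; by_cases hj : j = i <;> simp [hj, h]⟩

theorem exists_eq_update_of_lt_of_hammingDist_eq_one {ι : Type*} [Fintype ι] [DecidableEq ι]
    {a b : ι → Bool} (hab : a < b) (h : hammingDist a b = 1) :
    ∃ k, a k = false ∧ b = update a k true := by
  obtain ⟨k, hk⟩ := Finset.card_eq_one.1 h
  have heq : ∀ j, j ≠ k → a j = b j := fun j hj => by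
    by_contra hne
    exact hj (Finset.mem_singleton.1 (hk ▸ Finset.mem_filter.2 ⟨Finset.mem_univ j, hne⟩))
  have hne : a k ≠ b k := by
    simpa using (hk ▸ Finset.mem_singleton_self k : k ∈ Finset.univ.filter fun i => a i ≠ b i)
  have hak : a k = false ∧ b k = true := by
    have := hab.le k
    revert hne this; cases a k <;> cases b k <;> simp
  refine ⟨k, hak.1, funext fun j => ?_⟩
  by_cases hj : j = k
  · subst hj; simp [hak.2]
  · simp [hj, heq j hj]

theorem Pi.bool_induction {ι : Type*} [Finite ι] [DecidableEq ι] {P : (ι → Bool) → Prop}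
    (bot : P ⊥) (step : ∀ ε i, ε i = false → P ε → P (update ε i true)) (ε : ι → Bool) : P ε := by
  induction ε using WellFoundedLT.induction with
  | _ ε ih =>
  by_cases h : ∃ i, ε i = true
  · obtain ⟨i, hi⟩ := h
    have := step _ i (update_self ..) (ih _ (update_lt_self_iff.2 (by simp [hi])))
    rwa [update_idem, ← hi, update_eq_self] at this
  · convert bot
    funext i
    simpa using not_exists.1 h i

theorem Fin.existsUnique_castSucc {n : ℕ} {p : Fin (n + 1) → Prop} (h : ∃! k, p k)
    (hlast : ¬p (Fin.last n)) : ∃! j : Fin n, p j.castSucc := by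
  obtain ⟨k, hk, huniq⟩ := h
  obtain ⟨j, rfl⟩ := Fin.exists_castSucc_eq.2 fun h => hlast (h ▸ hk)
  exact ⟨j, hk, fun j' hj' => Fin.castSucc_injective n (huniq _ hj')⟩

theorem evalIdx_update {m : ℕ} (ε : Fin m → Bool) (i : Fin m) (b : Bool) (x : Fin m ⊕ Bool) :
    evalIdx (update ε i b) x = if x = .inl i then b else evalIdx ε x := by
  cases x with
  | inl j => by_cases h : j = i <;> simp [evalIdx, h]
  | inr c => simp [evalIdx]

namespace IsCubeMap

theorem injective {m n : ℕ} {f : (Fin m → Bool) → (Fin n → Bool)} (hf : IsCubeMap m n f) :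
    Injective f := by
  induction hf with
  | id => exact injective_id
  | face i b _ ih =>
    exact fun x y hxy => ih (funext fun j => by simpa using congrFun hxy (i.succAbove j))
  | symm i j _ _ ih =>
    exact fun x y hxy => ih (funext fun k => by simpa using congrFun hxy (Equiv.swap i j k))

theorem comp_perm {m n : ℕ} {f : (Fin m → Bool) → (Fin n → Bool)} (hf : IsCubeMap m n f)
    (π : Equiv.Perm (Fin n)) : IsCubeMap m n (fun x k => f x (π k)) := by
  cases n with
  | zero => rwa [Subsingleton.elim π 1]
  | succ n =>
    have hπ : π ∈ Submonoid.closure (Set.range fun i : Fin n => Equiv.swap i.castSucc i.succ) := by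
      rw [Equiv.Perm.mclosure_swap_castSucc_succ]; trivial
    induction hπ using Submonoid.closure_induction generalizing f with
    | mem _ h => obtain ⟨i, rfl⟩ := h; exact hf.symm _ _ (by simp)
    | one => exact hf
    | mul a b _ _ ha hb => exact hb (ha hf)

theorem comp_equiv {m n : ℕ} (e : Fin n ≃ Fin m) : IsCubeMap m n (fun ε k => ε (e k)) := by
  obtain rfl : n = m := by simpa using Fintype.card_congr e
  exact (id n).comp_perm e

theorem of_evalIdx_castSucc {m n : ℕ} {g : Fin (n + 1) → Fin m ⊕ Bool} {b : Bool}
    (hb : g (Fin.last n) = .inr b) (hg : IsCubeMap m n (fun ε k => evalIdx ε (g k.castSucc))) :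
    IsCubeMap m (n + 1) (fun ε k => evalIdx ε (g k)) := by
  convert hg.face (Fin.last n) b using 2 with ε
  ext k
  induction k using Fin.lastCases <;> simp [Fin.insertNth_last', hb, evalIdx]

theorem of_evalIdx {m : ℕ} : ∀ {n : ℕ} (g : Fin n → Fin m ⊕ Bool),
    (∀ i, ∃! k, g k = .inl i) → IsCubeMap m n (fun ε k => evalIdx ε (g k))
  | n, g, hg => by
    by_cases hconst : ∃ k b, g k = .inr b
    · obtain ⟨k, b, hk⟩ := hconst
      cases n with
      | zero => exact k.elim0
      | succ n =>
      let π := Equiv.swap k (Fin.last n)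
      have hπg : ∀ i, ∃! j : Fin n, g (π j.castSucc) = .inl i := fun i =>
        Fin.existsUnique_castSucc (π.existsUnique_congr_right.2 (hg i)) (by simp [π, hk])
      have := (of_evalIdx_castSucc (g := g ∘ π) (b := b) (by simp [π, hk])
        (of_evalIdx _ hπg)).comp_perm π
      simpa [π] using this
    · have hinl : ∀ k, ∃ i, g k = .inl i := fun k => by
        rcases h : g k with i | c
        exacts [⟨i, rfl⟩, (hconst ⟨k, c, h⟩).elim]
      choose t ht using hinl
      simp only [ht, Sum.inl.injEq] at hg
      convert comp_equiv (.ofBijective t ((bijective_iff_existsUnique t).2 hg)) using 3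
      simp [ht, evalIdx]

end IsCubeMap

theorem Function.Injective.map_update_true_ne {ι κ : Type*} [DecidableEq ι] [DecidableEq κ]
    {f : (ι → Bool) → (κ → Bool)} (hinj : Injective f) {ε : ι → Bool} {i j : ι} (hij : i ≠ j)
    (hi : ε i = false) {k k' : κ} (hk : f (update ε i true) = update (f ε) k true)
    (hk' : f (update ε j true) = update (f ε) k' true) : k ≠ k' := by
  rintro rfl
  simpa [hij, hi] using congrFun (hinj (hk.trans hk'.symm)) i

namespace AdjPreserving

variable {m n : ℕ} {f : (Fin m → Bool) → (Fin n → Bool)}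

theorem exists_update_true (hf : AdjPreserving f) {ε : Fin m → Bool} {i : Fin m}
    (hi : ε i = false) : ∃ k, f ε k = false ∧ f (update ε i true) = update (f ε) k true :=
  exists_eq_update_of_lt_of_hammingDist_eq_one (hf.1 (lt_update_self_iff.2 (by simp [hi])))
    (hf.2 _ _ (hammingDist_update_of_ne ε (by simp [hi])))

theorem map_update_update (hf : AdjPreserving f) (hinj : Injective f) {ε : Fin m → Bool}
    {i j : Fin m} (hij : i ≠ j) (hi : ε i = false) (hj : ε j = false) {k : Fin n}
    (hk : f (update ε i true) = update (f ε) k true) :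
    f (update (update ε j true) i true) = update (f (update ε j true)) k true := by
  have hfk : f ε k = false := by
    by_contra h
    have := congrFun (hinj (hk.trans (update_eq_self_iff.2 (by simpa using h)))) i
    simp [hi] at this
  obtain ⟨kj, -, hkj⟩ := hf.exists_update_true hj
  obtain ⟨a, -, ha⟩ := hf.exists_update_true (ε := update ε j true) (i := i) (by simp [hij, hi])
  obtain ⟨b, -, hb⟩ := hf.exists_update_true (ε := update ε i true) (i := j)
    (by simp [hij.symm, hj])
  have hsq : update (update (f ε) kj true) a true = update (update (f ε) k true) b true := by
    rw [← hkj, ← ha, ← hk, ← hb, update_comm hij]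
  -- at coordinate `k` the right-hand side is `true`, which forces `a = k`
  obtain rfl : a = k := by
    by_contra hak
    have := congrFun hsq k
    simp [update_apply, Ne.symm hak, hinj.map_update_true_ne hij hi hk hkj, hfk] at this
  exact ha

theorem map_update_true_eq_of_bot (hf : AdjPreserving f) (hinj : Injective f) {κ : Fin m → Fin n}
    (hκ : ∀ i, f (update ⊥ i true) = update (f ⊥) (κ i) true) (ε : Fin m → Bool) :
    ∀ i, ε i = false → f (update ε i true) = update (f ε) (κ i) true := by
  induction ε using Pi.bool_induction with
  | bot => exact fun i _ => hκ i
  | step ε j hj ih =>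
    intro i hi
    have hij : i ≠ j := by rintro rfl; simp at hi
    rw [update_of_ne hij] at hi
    exact hf.map_update_update hinj hij hi hj (ih i hi)

theorem exists_evalIdx_eq (hf : AdjPreserving f) (hinj : Injective f) :
    ∃ g : Fin n → Fin m ⊕ Bool, (∀ i, ∃! k, g k = .inl i) ∧ f = fun ε k => evalIdx ε (g k) := by
  choose κ hκ0 hκ using fun i : Fin m => hf.exists_update_true (ε := ⊥) (i := i) rfl
  have hflip := hf.map_update_true_eq_of_bot hinj hκ
  have hκinj : Injective κ := fun i j h =>
    by_contra fun hij => hinj.map_update_true_ne hij rfl (hκ i) (hκ j) h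
  let g := extend κ Sum.inl fun k => .inr (f ⊥ k)
  have hg : ∀ k i, g k = .inl i ↔ k = κ i := by
    intro k i
    by_cases hk : ∃ j, κ j = k
    · obtain ⟨j, rfl⟩ := hk; simp [g, hκinj.extend_apply, hκinj.eq_iff]
    · simp only [g, extend_apply' _ _ _ hk, reduceCtorEq, false_iff]
      rintro rfl
      exact hk ⟨i, rfl⟩
  refine ⟨g, fun i => ⟨κ i, (hg _ _).2 rfl, fun k => (hg k i).1⟩, funext fun ε => ?_⟩
  induction ε using Pi.bool_induction with
  | bot =>
    funext k
    by_cases hk : ∃ j, κ j = k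
    · obtain ⟨j, rfl⟩ := hk; simp [g, hκinj.extend_apply, evalIdx, hκ0]
    · simp [g, extend_apply' _ _ _ hk, evalIdx]
  | step ε i hi ih =>
    funext k
    rw [hflip ε i hi, ih, update_apply, evalIdx_update]
    simp only [hg]

end AdjPreserving

/-- An adjacency-preserving map `f : {0,1}^m → {0,1}^n` is a composite of face
maps and symmetry maps if and only if it is injective. -/
theorem isCubeMap_iff_injective (m n : ℕ) (f : (Fin m → Bool) → (Fin n → Bool))
    (hadj : AdjPreserving f) :
    IsCubeMap m n f ↔ Function.Injective f := by
  refine ⟨IsCubeMap.injective, fun hinj => ?_⟩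
  obtain ⟨g, hg, rfl⟩ := hadj.exists_evalIdx_eq hinj
  exact IsCubeMap.of_evalIdx g hg
end

section
/- Let (X_i)_{i∈I} be a family of weak higher dimensional transition systems X_i = (S_i, μ_i : L_i → Σ, T^i), each satisfying the Unique intermediate state axiom. Let S and L be sets, μ : L → Σ a map, and for each i let φ_i : S_i → S and ψ_i : L_i → L be set maps with μ∘ψ_i = μ_i. Let T' ⊆ ⋃_{n≥1} S × L^n × S be the union over i ∈ I of the images of the T^i, i.e. the set of tuples (φ_i(α), ψ_i(u_1),…,ψ_i(u_n), φ_i(β)) for (α,u_1,…,u_n,β) ∈ T^i. If T' satisfies the Unique intermediate state axiom, then T' satisfies the Multiset axiom, the Coherence axiom and the Unique intermediate state axiom; in particular (S, μ : L → Σ, T') is a weak higher dimensional transition system satisfying the Unique intermediate state axiom. (This is the implication (2) ⇒ (3) of the theorem on colimits of weak higher dimensional transition systems satisfying the Unique intermediate state axiom.) -/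
variable {S L Λ : Type*}

private theorem perm_map_lift {A B : Type*} (f : A → B) :
    ∀ {l l' : List B}, l.Perm l' → ∀ l₀ : List A, l₀.map f = l →
      ∃ l₀', l₀'.map f = l' ∧ l₀.Perm l₀' := by
  intro l l' h
  induction h with
  | nil => intro l₀ h0; exact ⟨l₀, h0, List.Perm.refl _⟩
  | cons x h ih =>
    intro l₀ h0
    cases l₀ with
    | nil => simp at h0
    | cons a t =>
      simp only [List.map_cons, List.cons.injEq] at h0
      obtain ⟨t', ht', hp⟩ := ih t h0.2
      exact ⟨a :: t', by simp [ht', h0.1], hp.cons a⟩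
  | swap x y l =>
    intro l₀ h0
    match l₀ with
    | [] => simp at h0
    | [a] => simp at h0
    | a :: b :: t =>
      simp only [List.map_cons, List.cons.injEq] at h0
      exact ⟨b :: a :: t, by simp [h0.1, h0.2.1, h0.2.2], List.Perm.swap b a t⟩
  | trans h1 h2 ih1 ih2 =>
    intro l₀ h0
    obtain ⟨m, hm, hp⟩ := ih1 l₀ h0
    obtain ⟨m', hm', hp'⟩ := ih2 m hm
    exact ⟨m', hm', hp.trans hp'⟩

/-- Let `(X_i)_{i ∈ ι}` be a family of weak higher dimensional transition
systems, each satisfying the Unique intermediate state axiom, and let `T'` be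
the union over `i` of the images of the transitions of the `X_i` under maps
`φ_i` on states and `ψ_i` on actions commuting with the labelling maps.  If
`T'` satisfies the Unique intermediate state axiom, then `T'` satisfies the
Multiset axiom, the Coherence axiom and the Unique intermediate state axiom; in
particular `(S, μ, T')` is a weak higher dimensional transition system
satisfying the Unique intermediate state axiom. -/
theorem union_of_images_whdts {Λ : Type*} {ι : Type*}
    (Si : ι → Type*) (Li : ι → Type*) (μi : ∀ i, Li i → Λ)
    (Ti : ∀ i, Si i → List (Li i) → Si i → Prop)
    (hne : ∀ i α l β, Ti i α l β → l ≠ [])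
    (hmul : ∀ i, MultisetAxiom (Ti i)) (hcoh : ∀ i, CoherenceAxiom (Ti i))
    (huis : ∀ i, UniqueIntermediate (Ti i))
    {S' L' : Type*} (μ : L' → Λ)
    (φ : ∀ i, Si i → S') (ψ : ∀ i, Li i → L')
    (hlabel : ∀ i u, μ (ψ i u) = μi i u)
    (T' : S' → List L' → S' → Prop)
    (hT' : ∀ α l β, T' α l β ↔
      ∃ (i : ι) (α₀ : Si i) (l₀ : List (Li i)) (β₀ : Si i),
        Ti i α₀ l₀ β₀ ∧ α = φ i α₀ ∧ l = l₀.map (ψ i) ∧ β = φ i β₀)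
    (huis' : UniqueIntermediate T') :
    MultisetAxiom T' ∧ CoherenceAxiom T' ∧ UniqueIntermediate T' := by
  -- Multiset axiom
  have hMul : MultisetAxiom T' := by
    intro α β l l' hperm hT
    rw [hT'] at hT ⊢
    obtain ⟨i, α₀, l₀, β₀, ht, hα, hl, hβ⟩ := hT
    obtain ⟨l₀', hmap, hp⟩ := perm_map_lift (ψ i) hperm l₀ hl.symm
    exact ⟨i, α₀, l₀', β₀, hmul i α₀ β₀ l₀ l₀' hp ht, hα, hmap.symm, hβ⟩
  refine ⟨hMul, ?_, huis'⟩
  intro α β ν₁ ν₂ l₁ l₂ l₃ h1 h2 h3 hbig ha1 hb1 ha2 hb2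
  rw [hT'] at hbig
  obtain ⟨i, α₀, m₀, β₀, ht, hα, hl, hβ⟩ := hbig
  rw [List.append_assoc] at hl
  obtain ⟨m₁, m₂₃, hm0, hm1, hm23⟩ := List.map_eq_append_iff.mp hl.symm
  obtain ⟨m₂, m₃, hm0', hm2, hm3⟩ := List.map_eq_append_iff.mp hm23
  subst hm0' hm0 hα hβ
  subst hm1 hm2 hm3
  have hn1 : m₁ ≠ [] := by rintro rfl; exact h1 rfl
  have hn2 : m₂ ≠ [] := by rintro rfl; exact h2 rfl
  have hn3 : m₃ ≠ [] := by rintro rfl; exact h3 rfl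
  obtain ⟨ν₁₀, ⟨hv1a, hv1b⟩, -⟩ := huis i α₀ β₀ m₁ (m₂ ++ m₃) hn1 (by
    simp [hn2]) ht
  obtain ⟨ν₂₀, ⟨hv2a, hv2b⟩, -⟩ := huis i α₀ β₀ (m₁ ++ m₂) m₃ (by simp [hn1])
    hn3 (by rwa [List.append_assoc])
  have mem : ∀ (x y : Si i) (m : List (Li i)), Ti i x m y → T' (φ i x) (m.map (ψ i)) (φ i y) := by
    intro x y m hm
    rw [hT']
    exact ⟨i, x, m, y, hm, rfl, rfl, rfl⟩
  have hbig' : T' (φ i α₀) (m₁.map (ψ i) ++ ((m₂.map (ψ i)) ++ (m₃.map (ψ i)))) (φ i β₀) := by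
    simpa using mem α₀ β₀ (m₁ ++ (m₂ ++ m₃)) ht
  obtain ⟨ν, -, huniq1⟩ := huis' (φ i α₀) (φ i β₀) (m₁.map (ψ i))
    ((m₂.map (ψ i)) ++ (m₃.map (ψ i))) h1 (by simp [h2]) hbig'
  have e1 : ν₁ = ν := huniq1 ν₁ ⟨ha1, hb1⟩
  have e1' : φ i ν₁₀ = ν := by
    refine huniq1 _ ⟨mem α₀ ν₁₀ m₁ hv1a, ?_⟩
    simpa using mem ν₁₀ β₀ (m₂ ++ m₃) hv1b
  have hbig'' : T' (φ i α₀) ((m₁.map (ψ i) ++ m₂.map (ψ i)) ++ m₃.map (ψ i)) (φ i β₀) := by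
    rw [List.append_assoc]; exact hbig'
  obtain ⟨ν', -, huniq2⟩ := huis' (φ i α₀) (φ i β₀) (m₁.map (ψ i) ++ m₂.map (ψ i))
    (m₃.map (ψ i)) (by simp [h1]) h3 hbig''
  have e2 : ν₂ = ν' := huniq2 ν₂ ⟨ha2, hb2⟩
  have e2' : φ i ν₂₀ = ν' := by
    refine huniq2 _ ⟨?_, mem ν₂₀ β₀ m₃ hv2b⟩
    simpa using mem α₀ ν₂₀ (m₁ ++ m₂) hv2a
  have hc := hcoh i α₀ β₀ ν₁₀ ν₂₀ m₁ m₂ m₃ hn1 hn2 hn3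
    (by rwa [List.append_assoc]) hv1a hv1b hv2a hv2b
  have := mem ν₁₀ ν₂₀ m₂ hc
  rwa [e1, ← e1', e2, ← e2']
end
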